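/- arXiv:1404.0861 — 4 statements merged into one kernel-verified Lean document; each statement's English description precedes it below -/
import Mathlib

section
/- Let q be a prime power and n ≥ 1. Then the finite unitary group U_n(F_q) has order q^{n(n-1)/2} · ∏_{i=1}^{n} (q^i − (−1)^i). -/
/-!
Every vector of hermitian norm one is the first row of a unitary matrix: a nondegenerate
hermitian form over `K` has an anisotropic vector, which can be rescaled to norm one because the
norm `x ↦ x ^ (q + 1)` maps `Kˣ` onto the nonzero elements fixed by `x ↦ x ^ q`, so
Gram–Schmidt goes through. The unitary matrices with first row `e₀` are the block matrices
`diag(1, A)` with `A` unitary, hence `|U_{m+1}| = s_{m+1} · |U_m|`, where `s_m` is the number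
of solutions of `∑ xᵢ ^ (q + 1) = 1` in `K^m`. Splitting off the first coordinate gives linear
recursions for the number of solutions of `∑ xᵢ ^ (q + 1) = 0` and `= 1`, which are solved by
`s_{m+1} = q ^ m (q ^ (m + 1) - (-1) ^ (m + 1))`.
-/

open Matrix

lemma Fintype.sum_ite_add_card_mul {α : Type*} [Fintype α] (p : α → Prop) [DecidablePred p]
    (a b : ℕ) :
    (∑ x, if p x then a else b) + Fintype.card {x // p x} * b =
      Fintype.card {x // p x} * a + Fintype.card α * b := by
  rw [Finset.sum_ite, Finset.sum_const, Finset.sum_const, smul_eq_mul, smul_eq_mul,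
    Fintype.card_subtype, ← Finset.card_univ,
    ← Finset.card_filter_add_card_filter_not (s := Finset.univ) p]
  ring

lemma Finset.prod_range_pow_mul_eq {M : Type*} [CommMonoid M] (a : M) (f : ℕ → M) (n : ℕ) :
    ∏ i ∈ range n, a ^ i * f (i + 1) = a ^ (n * (n - 1) / 2) * ∏ i ∈ Icc 1 n, f i := by
  rw [prod_mul_distrib, prod_pow_eq_pow_sum, sum_range_id, ← Ico_add_one_right_eq_Icc,
    prod_Ico_eq_prod_range, Nat.add_sub_cancel]
  simp only [add_comm 1]

namespace Matrix

section BlockOne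

variable {R : Type*} {m : ℕ}

def blockOne [Zero R] [One R] (A : Matrix (Fin m) (Fin m) R) :
    Matrix (Fin (m + 1)) (Fin (m + 1)) R :=
  of fun i j => Fin.cases (Fin.cases 1 (fun _ => 0) j) (fun i => Fin.cases 0 (A i) j) i

section ZeroOne

variable [Zero R] [One R] (A : Matrix (Fin m) (Fin m) R) (i j : Fin m)

@[simp] lemma blockOne_zero_zero : blockOne A 0 0 = 1 := rfl
@[simp] lemma blockOne_zero_succ : blockOne A 0 j.succ = 0 := rfl
@[simp] lemma blockOne_succ_zero : blockOne A i.succ 0 = 0 := rfl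
@[simp] lemma blockOne_succ_succ : blockOne A i.succ j.succ = A i j := rfl

lemma blockOne_injective : Function.Injective (blockOne : Matrix (Fin m) (Fin m) R → _) :=
  fun A B h => ext fun i j => by simpa using congrFun (congrFun h i.succ) j.succ

lemma eq_blockOne_submatrix {M : Matrix (Fin (m + 1)) (Fin (m + 1)) R} (h00 : M 0 0 = 1)
    (hrow : ∀ j : Fin m, M 0 j.succ = 0) (hcol : ∀ i : Fin m, M i.succ 0 = 0) :
    M = blockOne (M.submatrix Fin.succ Fin.succ) := by
  ext i j
  cases i using Fin.cases <;> cases j using Fin.cases <;> simp [h00, hrow, hcol]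

end ZeroOne

lemma blockOne_mul [Semiring R] (A B : Matrix (Fin m) (Fin m) R) :
    blockOne A * blockOne B = blockOne (A * B) := by
  ext i j
  cases i using Fin.cases <;> cases j using Fin.cases <;> simp [mul_apply, Fin.sum_univ_succ]

@[simp] lemma blockOne_one [Semiring R] : blockOne (1 : Matrix (Fin m) (Fin m) R) = 1 := by
  ext i j
  cases i using Fin.cases <;> cases j using Fin.cases <;>
    simp [one_apply, (Fin.succ_ne_zero _).symm]

lemma blockOne_mul_row_zero [Semiring R] (A : Matrix (Fin m) (Fin m) R)
    (P : Matrix (Fin (m + 1)) (Fin (m + 1)) R) : (blockOne A * P) 0 = P 0 := by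
  ext j
  simp [mul_apply, Fin.sum_univ_succ]

lemma conjTranspose_blockOne [Semiring R] [StarRing R] (A : Matrix (Fin m) (Fin m) R) :
    (blockOne A)ᴴ = blockOne Aᴴ := by
  ext i j
  cases i using Fin.cases <;> cases j using Fin.cases <;> simp

lemma det_blockOne [CommRing R] (A : Matrix (Fin m) (Fin m) R) : (blockOne A).det = A.det := by
  rw [det_succ_row_zero, Fin.sum_univ_succ]
  simp only [blockOne_zero_succ, mul_zero, zero_mul, Finset.sum_const_zero, add_zero]
  simp only [blockOne_zero_zero, Fin.val_zero, pow_zero, one_mul, Fin.succAbove_zero]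
  rfl

end BlockOne

section Hermitian

variable {K : Type*} [Field K] [StarRing K]

section

variable {n : Type*} [Fintype n]

lemma smul_dotProduct_star_smul (a : K) (v w : n → K) :
    a • v ⬝ᵥ star (a • w) = a * star a * (v ⬝ᵥ star w) := by
  rw [star_smul, smul_dotProduct, dotProduct_smul, smul_eq_mul, smul_eq_mul]
  ring

lemma IsHermitian.star_vecMul_dotProduct_star {H : Matrix n n K} (hH : H.IsHermitian)
    (u w : n → K) : star (u ᵥ* H ⬝ᵥ star w) = w ᵥ* H ⬝ᵥ star u := by
  rw [dotProduct_star, star_star, star_vecMul, hH.eq, dotProduct_mulVec]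

lemma IsHermitian.exists_vecMul_dotProduct_star_ne_zero [DecidableEq n]
    (htr : ∃ t : K, t + star t ≠ 0) {H : Matrix n n K} (hH : H.IsHermitian) (hH0 : H ≠ 0) :
    ∃ u, u ᵥ* H ⬝ᵥ star u ≠ 0 := by
  by_contra! hiso
  obtain ⟨s, hs⟩ := htr
  refine hH0 (Matrix.ext fun i j => ?_)
  suffices hpol : ∀ u w : n → K, u ᵥ* H ⬝ᵥ star w = 0 by
    simpa [Pi.star_single, dotProduct_single] using hpol (Pi.single i 1) (Pi.single j 1)
  intro u w
  by_contra hb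
  set b := u ᵥ* H ⬝ᵥ star w
  have hexp : ∀ t : K, (u + t • w) ᵥ* H ⬝ᵥ star (u + t • w) =
      u ᵥ* H ⬝ᵥ star u + star t * b + star (star t * b) +
        t * star t * (w ᵥ* H ⬝ᵥ star w) := by
    intro t
    rw [star_mul', star_star, hH.star_vecMul_dotProduct_star]
    simp only [b, add_vecMul, smul_vecMul, star_add, star_smul, add_dotProduct, dotProduct_add,
      smul_dotProduct, dotProduct_smul, smul_eq_mul]
    ring
  -- for `t = star (s / b)` the expansion reads `0 = s + star s`
  have h := hexp (star (s / b))
  rw [hiso, hiso, hiso, star_star, div_mul_cancel₀ s hb] at h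
  exact hs (by simpa using h.symm)

end

lemma IsHermitian.exists_row_zero_eq_mul_mul_conjTranspose_eq_blockOne {m : ℕ}
    {H : Matrix (Fin (m + 1)) (Fin (m + 1)) K} (hH : H.IsHermitian) (hHu : IsUnit H)
    {u : Fin (m + 1) → K} (hu : u ᵥ* H ⬝ᵥ star u = 1) :
    ∃ (P : Matrix (Fin (m + 1)) (Fin (m + 1)) K) (H' : Matrix (Fin m) (Fin m) K),
      P 0 = u ∧ H'.IsHermitian ∧ IsUnit H' ∧ P * H * Pᴴ = blockOne H' := by
  set f : Module.Dual K (Fin (m + 1) → K) := dotProductEquiv K _ (H *ᵥ star u)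
  have hf : ∀ w, f w = w ᵥ* H ⬝ᵥ star u := fun w => by
    simp [f, dotProduct_comm _ w, dotProduct_mulVec]
  have hfu : f u = 1 := (hf u).trans hu
  have hker : Module.finrank K (LinearMap.ker f) = m := by
    have h := LinearMap.finrank_range_add_finrank_ker f
    rw [LinearMap.range_eq_top.2 fun c => ⟨c • u, by simp [hfu]⟩, finrank_top,
      Module.finrank_self, Module.finrank_fin_fun] at h
    omega
  -- the rows of `P` are `u` followed by a basis of its orthogonal complement
  let b := Module.finBasisOfFinrankEq K _ hker
  let P : Matrix (Fin (m + 1)) (Fin (m + 1)) K := of (Fin.cons u fun i => (b i : Fin (m + 1) → K))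
  have hPu : IsUnit P := by
    have hb : LinearIndependent K fun i => (b i : Fin (m + 1) → K) :=
      b.linearIndependent.map' (LinearMap.ker f).subtype (Submodule.ker_subtype _)
    rw [← linearIndependent_rows_iff_isUnit, show P.row = Fin.cons u _ from rfl]
    refine linearIndependent_finCons.2 ⟨hb, fun hmem => ?_⟩
    have hspan : Submodule.span K (Set.range fun i => (b i : Fin (m + 1) → K)) ≤
        LinearMap.ker f := by
      rw [Submodule.span_le]
      rintro _ ⟨i, rfl⟩
      exact (b i).2
    have hu0 : f u = 0 := hspan hmem
    simp [hfu] at hu0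
  have hcol : ∀ i : Fin m, (P * H * Pᴴ) i.succ 0 = 0 := fun i => by
    change (b i : Fin (m + 1) → K) ᵥ* H ⬝ᵥ star u = 0
    rw [← hf]
    exact (b i).2
  have hrow : ∀ j : Fin m, (P * H * Pᴴ) 0 j.succ = 0 := fun j => by
    rw [← star_eq_zero, ← hcol j]
    exact hH.star_vecMul_dotProduct_star _ _
  have hG := eq_blockOne_submatrix hu hrow hcol
  refine ⟨P, _, rfl, blockOne_injective ?_, ?_, hG⟩
  · rw [← conjTranspose_blockOne, ← hG]
    exact (isHermitian_mul_mul_conjTranspose P hH).eq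
  · have hGu := (hPu.mul hHu).mul ((isUnit_conjTranspose _).2 hPu)
    rw [hG, isUnit_iff_isUnit_det, det_blockOne] at hGu
    exact (isUnit_iff_isUnit_det _).2 hGu

end Hermitian

section UnitaryGroup

variable {R : Type*} [CommRing R] [StarRing R] {m : ℕ}

lemma blockOne_mem_unitaryGroup_iff {A : Matrix (Fin m) (Fin m) R} :
    blockOne A ∈ unitaryGroup (Fin (m + 1)) R ↔ A ∈ unitaryGroup (Fin m) R := by
  rw [mem_unitaryGroup_iff, mem_unitaryGroup_iff, star_eq_conjTranspose, star_eq_conjTranspose,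
    conjTranspose_blockOne, blockOne_mul, ← blockOne_one, blockOne_injective.eq_iff]

lemma dotProduct_star_row_eq_one_of_mem_unitaryGroup
    {M : Matrix (Fin (m + 1)) (Fin (m + 1)) R}
    (hM : M ∈ unitaryGroup (Fin (m + 1)) R) (i : Fin (m + 1)) : M i ⬝ᵥ star (M i) = 1 := by
  have h := congrFun (congrFun (mem_unitaryGroup_iff.1 hM) i) i
  rwa [star_eq_conjTranspose, one_apply_eq] at h

lemma eq_blockOne_of_mem_unitaryGroup {M : Matrix (Fin (m + 1)) (Fin (m + 1)) R}
    (hM : M ∈ unitaryGroup (Fin (m + 1)) R)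
    (h0 : M 0 = (1 : Matrix (Fin (m + 1)) (Fin (m + 1)) R) 0) :
    M = blockOne (M.submatrix Fin.succ Fin.succ) := by
  refine eq_blockOne_submatrix (by simp [h0])
    (fun j => by simp [h0, (Fin.succ_ne_zero j).symm]) fun i => ?_
  have h := congrFun (congrFun (mem_unitaryGroup_iff.1 hM) i.succ) 0
  rw [one_apply_ne (Fin.succ_ne_zero i)] at h
  rw [← h, star_eq_conjTranspose, mul_apply, Fin.sum_univ_succ]
  simp [h0, (Fin.succ_ne_zero _).symm]

lemma natCard_unitaryGroup_row_zero_eq_one :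
    Nat.card {M : unitaryGroup (Fin (m + 1)) R // M.1 0 = (1 : unitaryGroup _ R).1 0} =
      Nat.card (unitaryGroup (Fin m) R) :=
  Nat.card_congr
    { toFun M := ⟨M.1.1.submatrix Fin.succ Fin.succ, blockOne_mem_unitaryGroup_iff.1
        ((eq_blockOne_of_mem_unitaryGroup M.1.2 M.2) ▸ M.1.2)⟩
      invFun A := ⟨⟨blockOne A, blockOne_mem_unitaryGroup_iff.2 A.2⟩, by
        rw [UnitaryGroup.one_val, ← blockOne_one (R := R)]; rfl⟩
      left_inv M := Subtype.ext (Subtype.ext (eq_blockOne_of_mem_unitaryGroup M.1.2 M.2).symm)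
      right_inv _ := rfl }

lemma natCard_unitaryGroup_row_zero_eq (B : unitaryGroup (Fin (m + 1)) R) :
    Nat.card {M : unitaryGroup (Fin (m + 1)) R // M.1 0 = B.1 0} =
      Nat.card (unitaryGroup (Fin m) R) := by
  rw [← natCard_unitaryGroup_row_zero_eq_one]
  refine Nat.card_congr (Equiv.subtypeEquiv (Equiv.mulRight B⁻¹) fun M => ?_)
  have hinj : Function.Injective (· ᵥ* star B.1) := fun v w h => by
    simpa [vecMul_vecMul, UnitaryGroup.star_mul_self] using congrArg (· ᵥ* B.1) h
  rw [← hinj.eq_iff, UnitaryGroup.one_val, ← mem_unitaryGroup_iff.1 B.2]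
  rfl

end UnitaryGroup

end Matrix

namespace UnitaryGroupCard

variable {K : Type*} [Field K]

section FiniteField

variable [Fintype K] {q : ℕ}

lemma two_le_of_card_eq_sq (hK : Fintype.card K = q ^ 2) : 2 ≤ q := by
  have h := Fintype.one_lt_card (α := K)
  rw [hK] at h
  by_contra! hq
  interval_cases q <;> simp at h

lemma add_pow_of_card_eq_sq (hK : Fintype.card K = q ^ 2) (x y : K) :
    (x + y) ^ q = x ^ q + y ^ q := by
  obtain ⟨p, hchar, n, hp, hcard⟩ := FiniteField.card' K
  obtain ⟨k, -, rfl⟩ := (Nat.dvd_prime_pow hp).1 (hcard ▸ hK ▸ Dvd.intro_left _ (sq q).symm)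
  have := Fact.mk hp
  exact add_pow_char_pow x y p k

lemma natCard_units_of_card_eq_sq (hK : Fintype.card K = q ^ 2) :
    Nat.card Kˣ = (q - 1) * (q + 1) := by
  classical
  have hq := two_le_of_card_eq_sq hK
  rw [Nat.card_eq_fintype_card, Fintype.card_units, hK]
  zify [hq.trans' one_le_two, Nat.one_le_pow _ _ (by omega : 0 < q)]
  ring

lemma natCard_ker_powMonoidHom_succ (hK : Fintype.card K = q ^ 2) :
    Nat.card (powMonoidHom (q + 1) : Kˣ →* Kˣ).ker = q + 1 := by
  rw [IsCyclic.card_powMonoidHom_ker, natCard_units_of_card_eq_sq hK, Nat.gcd_mul_left_left]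

lemma natCard_ker_powMonoidHom_pred (hK : Fintype.card K = q ^ 2) :
    Nat.card (powMonoidHom (q - 1) : Kˣ →* Kˣ).ker = q - 1 := by
  rw [IsCyclic.card_powMonoidHom_ker, natCard_units_of_card_eq_sq hK, Nat.gcd_mul_right_left]

lemma range_powMonoidHom_succ (hK : Fintype.card K = q ^ 2) :
    (powMonoidHom (q + 1) : Kˣ →* Kˣ).range = (powMonoidHom (q - 1)).ker := by
  refine Subgroup.eq_of_le_of_card_ge ?_ ?_
  · rintro _ ⟨u, rfl⟩
    rw [MonoidHom.mem_ker, powMonoidHom_apply, powMonoidHom_apply, ← pow_mul, mul_comm,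
      ← natCard_units_of_card_eq_sq hK, pow_card_eq_one']
  · rw [natCard_ker_powMonoidHom_pred hK, IsCyclic.card_powMonoidHom_range,
      natCard_units_of_card_eq_sq hK, Nat.gcd_mul_left_left,
      Nat.mul_div_cancel _ (Nat.succ_pos q)]

variable [StarRing K]

lemma exists_mul_star_eq (hstar : ∀ x : K, star x = x ^ q) (hK : Fintype.card K = q ^ 2)
    {c : K} (hc : star c = c) (hc0 : c ≠ 0) : ∃ x, x * star x = c := by
  have hq := two_le_of_card_eq_sq hK
  have hmem : Units.mk0 c hc0 ∈ (powMonoidHom (q + 1) : Kˣ →* Kˣ).range := by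
    rw [range_powMonoidHom_succ hK, MonoidHom.mem_ker, powMonoidHom_apply, Units.ext_iff,
      Units.val_pow_eq_pow_val, Units.val_mk0, Units.val_one]
    refine mul_right_cancel₀ hc0 ?_
    rw [← pow_succ, Nat.sub_add_cancel (by omega), ← hstar, hc, one_mul]
  obtain ⟨u, hu⟩ := hmem
  refine ⟨u, ?_⟩
  rw [hstar, ← pow_succ', ← Units.val_pow_eq_pow_val]
  exact congrArg Units.val hu

lemma natCard_mul_star_eq_one (hstar : ∀ x : K, star x = x ^ q)
    (hK : Fintype.card K = q ^ 2) : Nat.card {x : K // x * star x = 1} = q + 1 := by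
  rw [← natCard_ker_powMonoidHom_succ hK, ← rootsOfUnity_eq_ker,
    Nat.card_congr (rootsOfUnityEquivNthRoots K (q + 1))]
  refine Nat.card_congr (Equiv.subtypeEquivRight fun x => ?_)
  rw [Polynomial.mem_nthRoots (Nat.succ_pos q), hstar, pow_succ']

lemma exists_star_ne_self (hstar : ∀ x : K, star x = x ^ q) (hK : Fintype.card K = q ^ 2) :
    ∃ t : K, star t ≠ t := by
  by_contra! hfix
  have hq := two_le_of_card_eq_sq hK
  have htop : (powMonoidHom (q - 1) : Kˣ →* Kˣ).ker = ⊤ := by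
    refine eq_top_iff.2 fun u _ => ?_
    rw [MonoidHom.mem_ker, powMonoidHom_apply, Units.ext_iff]
    refine mul_right_cancel₀ u.ne_zero ?_
    rw [Units.val_pow_eq_pow_val, ← pow_succ, Nat.sub_add_cancel (by omega), ← hstar, hfix,
      Units.val_one, one_mul]
  have h := natCard_ker_powMonoidHom_pred hK
  rw [htop, Subgroup.card_top, natCard_units_of_card_eq_sq hK, Nat.mul_eq_left (by omega)] at h
  omega

lemma exists_add_star_ne_zero (hstar : ∀ x : K, star x = x ^ q) (hK : Fintype.card K = q ^ 2) :
    ∃ t : K, t + star t ≠ 0 := by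
  by_contra! htr
  obtain ⟨t, ht⟩ := exists_star_ne_self hstar hK
  have htwo : (2 : K) = 0 := by simpa [one_add_one_eq_two] using htr 1
  refine ht (eq_of_sub_eq_zero ?_)
  linear_combination htr t - t * htwo

end FiniteField

section Sphere

variable [StarRing K]

def normSphere (m : ℕ) (c : K) : Set (Fin m → K) := {v | v ⬝ᵥ star v = c}

lemma natCard_normSphere_mul_star_mul {a : K} (ha : a ≠ 0) (m : ℕ) (c : K) :
    Nat.card (normSphere m (a * star a * c)) = Nat.card (normSphere m c) := by
  have ha' : a * star a ≠ 0 := mul_ne_zero ha (star_ne_zero.2 ha)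
  refine (Nat.card_congr (Equiv.subtypeEquiv (LinearEquiv.smulOfNeZero K _ a ha).toEquiv
    fun v => ?_)).symm
  change _ = _ ↔ _ = _
  rw [LinearEquiv.coe_toEquiv, LinearEquiv.smulOfNeZero_apply, smul_dotProduct_star_smul,
    mul_right_inj' ha']

lemma natCard_normSphere_zero_zero : Nat.card (normSphere 0 (0 : K)) = 1 := by
  simp [normSphere]

lemma natCard_normSphere_zero_one : Nat.card (normSphere 0 (1 : K)) = 0 := by
  simp [normSphere]

lemma natCard_normSphere_succ [Fintype K] (m : ℕ) (c : K) :
    Nat.card (normSphere (m + 1) c) = ∑ x : K, Nat.card (normSphere m (c - x * star x)) := by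
  rw [← Nat.card_sigma]
  refine Nat.card_congr ((Equiv.subtypeEquiv (Fin.consEquiv fun _ => K).symm fun v => ?_).trans
    (Equiv.subtypeProdEquivSigmaSubtype fun x w => w ∈ normSphere m (c - x * star x)))
  change v ⬝ᵥ star v = c ↔ Fin.tail v ⬝ᵥ star (Fin.tail v) = c - v 0 * star (v 0)
  rw [eq_sub_iff_add_eq', dotProduct, Fin.sum_univ_succ]
  rfl

end Sphere

section FiniteSphere

variable [Fintype K] [StarRing K] {q : ℕ}

lemma natCard_normSphere_of_star_eq (hstar : ∀ x : K, star x = x ^ q)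
    (hK : Fintype.card K = q ^ 2) (m : ℕ) {c : K} (hc : star c = c) (hc0 : c ≠ 0) :
    Nat.card (normSphere m c) = Nat.card (normSphere m (1 : K)) := by
  obtain ⟨x, rfl⟩ := exists_mul_star_eq hstar hK hc hc0
  rw [← natCard_normSphere_mul_star_mul (left_ne_zero_of_mul hc0) m 1, mul_one]

lemma natCard_normSphere_succ_zero_add (hstar : ∀ x : K, star x = x ^ q)
    (hK : Fintype.card K = q ^ 2) (m : ℕ) :
    Nat.card (normSphere (m + 1) (0 : K)) + Nat.card (normSphere m (1 : K)) =
      Nat.card (normSphere m (0 : K)) + q ^ 2 * Nat.card (normSphere m (1 : K)) := by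
  classical
  have hterm : ∀ x : K, Nat.card (normSphere m (0 - x * star x)) =
      if x = 0 then Nat.card (normSphere m (0 : K)) else Nat.card (normSphere m (1 : K)) := by
    intro x
    split_ifs with hx
    · simp [hx]
    · refine natCard_normSphere_of_star_eq hstar hK m ?_ ?_
      · rw [zero_sub, star_neg, (IsSelfAdjoint.mul_star_self x).star_eq]
      · simpa using hx
  have h := Fintype.sum_ite_add_card_mul (fun x : K => x = 0) (Nat.card (normSphere m (0 : K)))
    (Nat.card (normSphere m (1 : K)))
  rw [Fintype.card_subtype_eq, one_mul, one_mul, hK] at h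
  rw [natCard_normSphere_succ, Finset.sum_congr rfl fun x _ => hterm x, h]

lemma natCard_normSphere_succ_one_add (hstar : ∀ x : K, star x = x ^ q)
    (hK : Fintype.card K = q ^ 2) (m : ℕ) :
    Nat.card (normSphere (m + 1) (1 : K)) + (q + 1) * Nat.card (normSphere m (1 : K)) =
      (q + 1) * Nat.card (normSphere m (0 : K)) + q ^ 2 * Nat.card (normSphere m (1 : K)) := by
  classical
  have hterm : ∀ x : K, Nat.card (normSphere m (1 - x * star x)) =
      if x * star x = 1 then Nat.card (normSphere m (0 : K))
      else Nat.card (normSphere m (1 : K)) := by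
    intro x
    split_ifs with hx
    · rw [hx, sub_self]
    · refine natCard_normSphere_of_star_eq hstar hK m ?_ (sub_ne_zero.2 (Ne.symm hx))
      rw [star_sub, star_one, (IsSelfAdjoint.mul_star_self x).star_eq]
  have h := Fintype.sum_ite_add_card_mul (fun x : K => x * star x = 1)
    (Nat.card (normSphere m (0 : K))) (Nat.card (normSphere m (1 : K)))
  rw [← Nat.card_eq_fintype_card, natCard_mul_star_eq_one hstar hK, hK] at h
  rw [natCard_normSphere_succ, Finset.sum_congr rfl fun x _ => hterm x, h]

-- multiplied by `q` so that the formulas also hold for `m = 0`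
lemma natCard_normSphere_formula (hstar : ∀ x : K, star x = x ^ q)
    (hK : Fintype.card K = q ^ 2) (m : ℕ) :
    (q : ℤ) * Nat.card (normSphere m (0 : K)) = q ^ (2 * m) + (-1) ^ m * (q ^ (m + 1) - q ^ m) ∧
      (q : ℤ) * Nat.card (normSphere m (1 : K)) = q ^ m * (q ^ m - (-1) ^ m) := by
  induction m with
  | zero =>
    rw [natCard_normSphere_zero_zero, natCard_normSphere_zero_one]
    constructor <;> ring
  | succ m ih =>
    obtain ⟨ih0, ih1⟩ := ih
    have h0 := congrArg (Nat.cast : ℕ → ℤ) (natCard_normSphere_succ_zero_add hstar hK m)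
    have h1 := congrArg (Nat.cast : ℕ → ℤ) (natCard_normSphere_succ_one_add hstar hK m)
    push_cast at h0 h1
    constructor
    · linear_combination (q : ℤ) * h0 + ih0 + ((q : ℤ) ^ 2 - 1) * ih1
    · linear_combination (q : ℤ) * h1 + ((q : ℤ) + 1) * ih0 + ((q : ℤ) ^ 2 - q - 1) * ih1

lemma natCard_normSphere_succ_one (hstar : ∀ x : K, star x = x ^ q)
    (hK : Fintype.card K = q ^ 2) (m : ℕ) :
    (Nat.card (normSphere (m + 1) (1 : K)) : ℤ) = q ^ m * (q ^ (m + 1) - (-1) ^ (m + 1)) := by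
  have hq : (q : ℤ) ≠ 0 := by have := two_le_of_card_eq_sq hK; positivity
  refine mul_left_cancel₀ hq ?_
  rw [(natCard_normSphere_formula hstar hK (m + 1)).2]
  ring

end FiniteSphere

section Unitary

variable [Fintype K] [StarRing K] {q : ℕ}

lemma exists_vecMul_dotProduct_star_eq_one (hstar : ∀ x : K, star x = x ^ q)
    (hK : Fintype.card K = q ^ 2) {n : Type*} [Fintype n] [DecidableEq n]
    {H : Matrix n n K} (hH : H.IsHermitian) (hH0 : H ≠ 0) :
    ∃ u, u ᵥ* H ⬝ᵥ star u = 1 := by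
  obtain ⟨u, hu⟩ :=
    hH.exists_vecMul_dotProduct_star_ne_zero (exists_add_star_ne_zero hstar hK) hH0
  have hfix : star (u ᵥ* H ⬝ᵥ star u)⁻¹ = (u ᵥ* H ⬝ᵥ star u)⁻¹ := by
    rw [star_inv₀, hH.star_vecMul_dotProduct_star]
  obtain ⟨x, hx⟩ := exists_mul_star_eq hstar hK hfix (inv_ne_zero hu)
  refine ⟨x • u, ?_⟩
  rw [smul_vecMul, smul_dotProduct_star_smul, hx, inv_mul_cancel₀ hu]

lemma exists_row_zero_eq_mul_mul_conjTranspose_eq_one (hstar : ∀ x : K, star x = x ^ q)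
    (hK : Fintype.card K = q ^ 2) (m : ℕ) {H : Matrix (Fin (m + 1)) (Fin (m + 1)) K}
    (hH : H.IsHermitian) (hHu : IsUnit H) {u : Fin (m + 1) → K}
    (hu : u ᵥ* H ⬝ᵥ star u = 1) :
    ∃ P : Matrix (Fin (m + 1)) (Fin (m + 1)) K, P 0 = u ∧ P * H * Pᴴ = 1 := by
  induction m with
  | zero =>
    obtain ⟨P, H', hPu, -, -, hG⟩ :=
      hH.exists_row_zero_eq_mul_mul_conjTranspose_eq_blockOne hHu hu
    exact ⟨P, hPu, by rw [hG, Subsingleton.elim H' 1, blockOne_one]⟩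
  | succ m ih =>
    obtain ⟨P, H', hPu, hH', hH'u, hG⟩ :=
      hH.exists_row_zero_eq_mul_mul_conjTranspose_eq_blockOne hHu hu
    obtain ⟨u', hu'⟩ := exists_vecMul_dotProduct_star_eq_one hstar hK hH' hH'u.ne_zero
    obtain ⟨P', -, hP'⟩ := ih hH' hH'u hu'
    refine ⟨blockOne P' * P, by rw [blockOne_mul_row_zero, hPu], ?_⟩
    calc blockOne P' * P * H * (blockOne P' * P)ᴴ
        = blockOne P' * (P * H * Pᴴ) * (blockOne P')ᴴ := by
          simp only [conjTranspose_mul, Matrix.mul_assoc]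
      _ = 1 := by rw [hG, conjTranspose_blockOne, blockOne_mul, blockOne_mul, hP', blockOne_one]

lemma exists_mem_unitaryGroup_row_zero_eq (hstar : ∀ x : K, star x = x ^ q)
    (hK : Fintype.card K = q ^ 2) {m : ℕ} {v : Fin (m + 1) → K}
    (hv : v ∈ normSphere (m + 1) 1) : ∃ B : unitaryGroup (Fin (m + 1)) K, B.1 0 = v := by
  obtain ⟨P, hPv, hP⟩ := exists_row_zero_eq_mul_mul_conjTranspose_eq_one hstar hK m
    isHermitian_one isUnit_one (u := v) (by rwa [vecMul_one])
  rw [Matrix.mul_one, ← star_eq_conjTranspose] at hP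
  exact ⟨⟨P, mem_unitaryGroup_iff.2 hP⟩, hPv⟩

lemma natCard_unitaryGroup_succ (hstar : ∀ x : K, star x = x ^ q)
    (hK : Fintype.card K = q ^ 2) (m : ℕ) :
    Nat.card (unitaryGroup (Fin (m + 1)) K) =
      Nat.card (normSphere (m + 1) (1 : K)) * Nat.card (unitaryGroup (Fin m) K) := by
  have := Fintype.ofFinite (normSphere (m + 1) (1 : K))
  let row : unitaryGroup (Fin (m + 1)) K → normSphere (m + 1) (1 : K) :=
    fun M => ⟨M.1 0, dotProduct_star_row_eq_one_of_mem_unitaryGroup M.2 0⟩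
  have hfiber : ∀ v, Nat.card {M // row M = v} = Nat.card (unitaryGroup (Fin m) K) := by
    intro v
    obtain ⟨B, hB⟩ := exists_mem_unitaryGroup_row_zero_eq hstar hK v.2
    rw [← natCard_unitaryGroup_row_zero_eq B, hB]
    exact Nat.card_congr (Equiv.subtypeEquivRight fun M => Subtype.ext_iff)
  rw [← Nat.card_congr (Equiv.sigmaFiberEquiv row), Nat.card_sigma,
    Finset.sum_congr rfl fun v _ => hfiber v, Finset.sum_const, Finset.card_univ, smul_eq_mul,
    ← Nat.card_eq_fintype_card]

lemma natCard_unitaryGroup (hstar : ∀ x : K, star x = x ^ q) (hK : Fintype.card K = q ^ 2)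
    (n : ℕ) : (Nat.card (unitaryGroup (Fin n) K) : ℤ) =
      ∏ i ∈ Finset.range n, (q : ℤ) ^ i * ((q : ℤ) ^ (i + 1) - (-1) ^ (i + 1)) := by
  induction n with
  | zero => simp
  | succ n ih =>
    rw [natCard_unitaryGroup_succ hstar hK, Finset.prod_range_succ, ← ih, Nat.cast_mul,
      natCard_normSphere_succ_one hstar hK, mul_comm]

end Unitary

/-- The conjugation `x ↦ x ^ q` of `K` over its subfield with `q` elements, as a star structure:
with it, the group of the theorem is `Matrix.unitaryGroup`. -/
abbrev frobeniusStarRing (K : Type*) [Field K] [Fintype K] {q : ℕ}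
    (hK : Fintype.card K = q ^ 2) : StarRing K where
  star x := x ^ q
  star_involutive x := by
    change (x ^ q) ^ q = x
    rw [← pow_mul, ← sq, ← hK, FiniteField.pow_card]
  star_mul x y := by
    change (x * y) ^ q = y ^ q * x ^ q
    rw [mul_pow, mul_comm]
  star_add := add_pow_of_card_eq_sq hK

end UnitaryGroupCard

open UnitaryGroupCard

theorem unitary_group_card_general (q n : ℕ)
    (K : Type*) [Field K] [Fintype K] (hK : Fintype.card K = q ^ 2) :
    (Nat.card {M : Matrix (Fin n) (Fin n) K //
        M * (M.map fun x => x ^ q).transpose = 1} : ℤ) =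
      (q : ℤ) ^ (n * (n - 1) / 2) * ∏ i ∈ Finset.Icc 1 n, ((q : ℤ) ^ i - (-1) ^ i) := by
  let := frobeniusStarRing K hK
  rw [← Finset.prod_range_pow_mul_eq, ← natCard_unitaryGroup (fun _ => rfl) hK n]
  exact congrArg _ (Nat.card_congr (Equiv.subtypeEquivRight fun M => mem_unitaryGroup_iff.symm))

/-- **Order of the finite unitary group.**
Let `q` be a prime power and `n ≥ 1`. Let `K` be a finite field with `q ^ 2` elements,
and let `σ : x ↦ x ^ q` be the nontrivial automorphism of `K` over its subfield with `q`
elements. The finite unitary group `U_n(F_q)` of matrices `M` with `M ⬝ (σ M)ᵀ = 1` has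
order `q ^ (n(n-1)/2) * ∏_{i=1}^{n} (q ^ i - (-1) ^ i)`. -/
theorem unitary_group_card (q n : ℕ) (hq : IsPrimePow q) (hn : 1 ≤ n)
    (K : Type*) [Field K] [Fintype K] (hK : Fintype.card K = q ^ 2) :
    (Nat.card {M : Matrix (Fin n) (Fin n) K //
        M * (M.map fun x => x ^ q).transpose = 1} : ℤ) =
      (q : ℤ) ^ (n * (n - 1) / 2) * ∏ i ∈ Finset.Icc 1 n, ((q : ℤ) ^ i - (-1) ^ i) :=
  unitary_group_card_general q n K hK
end

section
/- Let 𝔽 be a finite field with q elements and n ≥ 1. Then the symplectic group Sp_{2n}(𝔽) has order q^{n²} · ∏_{i=1}^{n} (q^{2i} − 1). (This is the instance of the order formula |G(F_q)| = q^N ∏_{i=1}^{l}(q^{d_i}−1) for the split group of type C_n, whose exponents are d_i = 2, 4, …, 2n and whose number of positive roots is N = n².) -/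
/-!
The rows `eᵢ = M (inl i)`, `fᵢ = M (inr i)` of a symplectic matrix `M` form a symplectic basis of
`𝔽^{2n}` for the standard alternating form, and every symplectic basis arises this way. Symplectic
frames of length `m` of a nondegenerate alternating form on a space of dimension `2m` are counted
by induction: the first pair `(e, f)` with `B e f = 1` can be chosen in `(q^{2m} - 1) q^{2m-1}`
ways, and the rest is a frame of the restriction of `B` to `{e, f}^⊥`, which is again
nondegenerate, of dimension `2m - 2`. Since `∑_{i ≤ m} (2i - 1) = m²`, the product of these
counts is `q^{m²} ∏_{i ≤ m} (q^{2i} - 1)`.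
-/

open Finset LinearMap

theorem Module.Dual.natCard_fiber_of_ne_zero {K V : Type*} [Field K] [Finite K] [AddCommGroup V]
    [Module K V] [FiniteDimensional K V] {φ : Module.Dual K V} (hφ : φ ≠ 0) (c : K) :
    Nat.card {v // φ v = c} = Nat.card K ^ (Module.finrank K V - 1) := by
  obtain ⟨v₀, rfl⟩ := LinearMap.surjective hφ c
  calc Nat.card {v // φ v = φ v₀}
      = Nat.card (ker φ) := Nat.card_congr
        { toFun v := ⟨v - v₀, by simp [v.2]⟩
          invFun w := ⟨w + v₀, by simp [mem_ker.mp w.2]⟩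
          left_inv v := by simp
          right_inv w := by simp }
    _ = Nat.card K ^ (Module.finrank K V - 1) := by
      rw [Module.natCard_eq_pow_finrank (K := K), ← finrank_ker_add_one_of_ne_zero hφ,
        Nat.add_sub_cancel]

namespace LinearMap.BilinForm

variable {K V : Type*} [Field K] [AddCommGroup V] [Module K V] {B : LinearMap.BilinForm K V}

theorem separatingLeft_restrict_ker_inf_ker (hB : B.IsAlt) (hB' : B.SeparatingLeft) {a b : V}
    (hab : B a b = 1) : (B.restrict (ker (B a) ⊓ ker (B b))).SeparatingLeft := by
  rintro ⟨u, hu_mem⟩ hu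
  obtain ⟨hua, hub⟩ := Submodule.mem_inf.mp hu_mem
  have hua' : B u a = 0 := hB.isRefl _ _ hua
  have hub' : B u b = 0 := hB.isRefl _ _ hub
  have hba : B b a = -1 := by rw [← hB.neg_eq, hab]
  refine Subtype.ext (hB' u fun x ↦ ?_)
  -- `x` minus its component along `span {a, b}`
  have hx : x + B b x • a - B a x • b ∈ ker (B a) ⊓ ker (B b) := by
    simp [hB.self_eq_zero, hab, hba]
  simpa [hua', hub'] using hu ⟨_, hx⟩

theorem finrank_ker_inf_ker_add_two [FiniteDimensional K V] (hB : B.IsAlt) {a b : V}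
    (hab : B a b = 1) : Module.finrank K ↥(ker (B a) ⊓ ker (B b)) + 2 = Module.finrank K V := by
  have hba : B b a = -1 := by rw [← hB.neg_eq, hab]
  have hsurj : Function.Surjective ((B a).prod (B b)) := fun st ↦
    ⟨st.1 • b - st.2 • a, by simp [hB.self_eq_zero, hab, hba]⟩
  have := finrank_range_add_finrank_ker ((B a).prod (B b))
  rw [range_eq_top.mpr hsurj, finrank_top, ker_prod] at this
  simp only [Module.finrank_prod, Module.finrank_self] at this
  omega

theorem natCard_hyperbolicPairs [Finite K] [FiniteDimensional K V] (hB : B.SeparatingLeft) :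
    Nat.card {x : V × V // B x.1 x.2 = 1} =
      (Nat.card V - 1) * Nat.card K ^ (Module.finrank K V - 1) := by
  classical
  have : Finite V := Module.finite_of_finite K
  have : Fintype V := Fintype.ofFinite V
  have hfiber (a : V) : Nat.card {b // B a b = 1} =
      if a = 0 then 0 else Nat.card K ^ (Module.finrank K V - 1) := by
    split_ifs with ha
    · simp [ha]
    · exact Module.Dual.natCard_fiber_of_ne_zero (fun h ↦ ha (hB a (by simp [h]))) 1
  rw [Nat.card_congr (Equiv.subtypeProdEquivSigmaSubtype fun a b ↦ B a b = 1), Nat.card_sigma]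
  simp only [hfiber, Finset.sum_ite, Finset.sum_const_zero, zero_add, Finset.sum_const,
    smul_eq_mul, Finset.filter_ne', Finset.card_erase_of_mem (Finset.mem_univ _),
    Finset.card_univ, Nat.card_eq_fintype_card]

/-- `p i = (eᵢ, fᵢ)`; when `finrank K V = 2 * m` these are the symplectic bases of `V`. -/
def IsSymplecticFrame (B : LinearMap.BilinForm K V) {m : ℕ} (p : Fin m → V × V) : Prop :=
  ∀ i j, B (p i).1 (p j).1 = 0 ∧ B (p i).2 (p j).2 = 0 ∧ B (p i).1 (p j).2 = if i = j then 1 else 0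

theorem isSymplecticFrame_cons_iff (hB : B.IsAlt) {m : ℕ} (x : V × V) (p : Fin m → V × V) :
    B.IsSymplecticFrame (Fin.cons x p) ↔
      B x.1 x.2 = 1 ∧ (∀ i, (p i).1 ∈ ker (B x.1) ⊓ ker (B x.2) ∧
        (p i).2 ∈ ker (B x.1) ⊓ ker (B x.2)) ∧ B.IsSymplecticFrame p := by
  constructor
  · intro h
    refine ⟨by simpa using (h 0 0).2.2, fun i ↦ ?_, fun i j ↦ by simpa using h i.succ j.succ⟩
    have h0i := h 0 i.succ
    have hi0 := h i.succ 0
    simp only [Fin.cons_zero, Fin.cons_succ, (Fin.succ_ne_zero i).symm, Fin.succ_ne_zero i,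
      if_false] at h0i hi0
    simp only [Submodule.mem_inf, mem_ker]
    exact ⟨⟨h0i.1, hB.isRefl _ _ hi0.2.2⟩, h0i.2.2, hB.isRefl _ _ hi0.2.1⟩
  · rintro ⟨hx, hp, hpp⟩ i j
    simp only [Submodule.mem_inf, mem_ker] at hp
    have hpx (i : Fin m) : B (p i).1 x.1 = 0 ∧ B (p i).1 x.2 = 0 ∧ B (p i).2 x.1 = 0 ∧
        B (p i).2 x.2 = 0 :=
      ⟨hB.isRefl _ _ (hp i).1.1, hB.isRefl _ _ (hp i).1.2, hB.isRefl _ _ (hp i).2.1,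
        hB.isRefl _ _ (hp i).2.2⟩
    induction i using Fin.cases <;> induction j using Fin.cases
    · simp [hB.self_eq_zero, hx]
    · simp [hp, (Fin.succ_ne_zero _).symm]
    · simp [hpx, Fin.succ_ne_zero]
    · simpa using hpp _ _

def symplecticFrameSuccEquiv (hB : B.IsAlt) (m : ℕ) :
    {p : Fin (m + 1) → V × V // B.IsSymplecticFrame p} ≃
      Σ x : {x : V × V // B x.1 x.2 = 1},
        {p : Fin m → ↥(ker (B x.1.1) ⊓ ker (B x.1.2)) × ↥(ker (B x.1.1) ⊓ ker (B x.1.2)) //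
          (B.restrict (ker (B x.1.1) ⊓ ker (B x.1.2))).IsSymplecticFrame p} where
  toFun p :=
    have h := (isSymplecticFrame_cons_iff hB (p.1 0) (Fin.tail p.1)).mp
      (by rw [Fin.cons_self_tail]; exact p.2)
    ⟨⟨p.1 0, h.1⟩, fun i ↦ (⟨(p.1 i.succ).1, (h.2.1 i).1⟩, ⟨(p.1 i.succ).2, (h.2.1 i).2⟩), h.2.2⟩
  invFun x := ⟨Fin.cons x.1.1 fun i ↦ ((x.2.1 i).1, (x.2.1 i).2),
    (isSymplecticFrame_cons_iff hB _ _).mpr ⟨x.1.2, fun i ↦ ⟨(x.2.1 i).1.2, (x.2.1 i).2.2⟩, x.2.2⟩⟩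
  left_inv p := Subtype.ext (Fin.cons_self_tail p.1)
  right_inv _ := rfl

theorem natCard_isSymplecticFrame [Finite K] [FiniteDimensional K V] (hB : B.IsAlt)
    (hB' : B.SeparatingLeft) {m : ℕ} (hV : Module.finrank K V = 2 * m) :
    (Nat.card {p : Fin m → V × V // B.IsSymplecticFrame p} : ℤ) =
      (Nat.card K : ℤ) ^ (m ^ 2) * ∏ i ∈ Icc 1 m, ((Nat.card K : ℤ) ^ (2 * i) - 1) := by
  induction m generalizing V with
  | zero => simp [IsSymplecticFrame]
  | succ m ih =>
    have : Finite V := Module.finite_of_finite K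
    have : Fintype {x : V × V // B x.1 x.2 = 1} := Fintype.ofFinite _
    have hW (x : {x : V × V // B x.1 x.2 = 1}) :=
      ih (B := B.restrict (ker (B x.1.1) ⊓ ker (B x.1.2))) (fun u ↦ hB u)
        (separatingLeft_restrict_ker_inf_ker hB hB' x.2)
        (by have := finrank_ker_inf_ker_add_two hB x.2; omega)
    have hq : 1 ≤ Nat.card K ^ (2 * (m + 1)) := Nat.one_le_pow _ _ Nat.card_pos
    rw [Nat.card_congr (symplecticFrameSuccEquiv hB m), Nat.card_sigma, Nat.cast_sum,
      Finset.sum_congr rfl fun x _ ↦ hW x, Finset.sum_const, Finset.card_univ,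
      ← Nat.card_eq_fintype_card, natCard_hyperbolicPairs hB',
      Module.natCard_eq_pow_finrank (K := K), hV, Finset.prod_Icc_succ_top (by omega),
      nsmul_eq_mul, show 2 * (m + 1) - 1 = 2 * m + 1 by omega]
    push_cast [hq]
    ring

theorem isSymplecticFrame_iff_apply_eq_fromBlocks (hB : B.IsAlt) {n : ℕ} (f : Fin n ⊕ Fin n → V) :
    B.IsSymplecticFrame (fun i ↦ (f (.inl i), f (.inr i))) ↔
      ∀ i j, B (f i) (f j) = (Matrix.fromBlocks 0 1 (-1) 0 : Matrix _ _ K) i j := by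
  constructor
  · rintro h (i | i) (j | j)
    · simpa using (h i j).1
    · simpa [Matrix.one_apply] using (h i j).2.2
    · rw [← hB.neg_eq, (h j i).2.2]
      simp [Matrix.one_apply, eq_comm]
    · simpa using (h i j).2.1
  · intro h i j
    exact ⟨by simpa using h (.inl i) (.inl j), by simpa using h (.inr i) (.inr j),
      by simpa [Matrix.one_apply] using h (.inl i) (.inr j)⟩

end LinearMap.BilinForm

namespace Matrix

variable {ι R : Type*} [Fintype ι] [CommRing R]

theorem mul_mul_transpose_apply (M A : Matrix ι ι R) (i j : ι) :
    (M * A * Mᵀ) i j = M i ⬝ᵥ A *ᵥ M j := by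
  rw [mul_apply', dotProduct_mulVec]
  rfl

variable {l : Type*} [Fintype l] [DecidableEq l]

theorem isAlt_toBilin'_fromBlocks :
    (fromBlocks 0 1 (-1) 0 : Matrix (l ⊕ l) (l ⊕ l) R).toBilin'.IsAlt := by
  intro v
  simp [toBilin'_apply', fromBlocks_mulVec, dotProduct, Fintype.sum_sum_type, neg_mulVec, mul_comm]

theorem separatingLeft_toBilin'_fromBlocks {K : Type*} [Field K] :
    (fromBlocks 0 1 (-1) 0 : Matrix (l ⊕ l) (l ⊕ l) K).toBilin'.SeparatingLeft := by
  refine (LinearMap.BilinForm.nondegenerate_toBilin'_of_det_ne_zero' _ ?_).1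
  have : (fromBlocks 0 1 (-1) 0 : Matrix (l ⊕ l) (l ⊕ l) K) = -J l K := by
    simp [J, fromBlocks_neg]
  rw [this, det_neg]
  exact (isUnit_neg_one.pow _ |>.mul (isUnit_det_J l K)).ne_zero

end Matrix

theorem symplectic_group_card_general (q n : ℕ)
    (𝔽 : Type*) [Field 𝔽] [Fintype 𝔽] (h𝔽 : Fintype.card 𝔽 = q) :
    (Nat.card {M : Matrix (Fin n ⊕ Fin n) (Fin n ⊕ Fin n) 𝔽 //
        M * (Matrix.fromBlocks 0 1 (-1) 0) * M.transpose = Matrix.fromBlocks 0 1 (-1) 0} : ℤ) =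
      (q : ℤ) ^ (n ^ 2) * ∏ i ∈ Finset.Icc 1 n, ((q : ℤ) ^ (2 * i) - 1) := by
  set J : Matrix (Fin n ⊕ Fin n) (Fin n ⊕ Fin n) 𝔽 := Matrix.fromBlocks 0 1 (-1) 0
  have hJ : J.toBilin'.IsAlt := Matrix.isAlt_toBilin'_fromBlocks
  let rows : Matrix (Fin n ⊕ Fin n) (Fin n ⊕ Fin n) 𝔽 ≃
      (Fin n → (Fin n ⊕ Fin n → 𝔽) × (Fin n ⊕ Fin n → 𝔽)) :=
    Matrix.of.symm.trans
      ((Equiv.sumArrowEquivProdArrow _ _ _).trans (Equiv.arrowProdEquivProdArrow _ _ _).symm)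
  have e : {M // M * J * M.transpose = J} ≃ {p // J.toBilin'.IsSymplecticFrame p} :=
    rows.subtypeEquiv fun M ↦ by
      refine Iff.trans ?_ (LinearMap.BilinForm.isSymplecticFrame_iff_apply_eq_fromBlocks hJ M).symm
      simp only [← Matrix.ext_iff, Matrix.mul_mul_transpose_apply, Matrix.toBilin'_apply']
      rfl
  rw [Nat.card_congr e, LinearMap.BilinForm.natCard_isSymplecticFrame hJ
    Matrix.separatingLeft_toBilin'_fromBlocks (by simp [two_mul]), Nat.card_eq_fintype_card, h𝔽]

/-- **Order of the symplectic group.**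
Let `𝔽` be a finite field with `q` elements and `n ≥ 1`. The symplectic group
`Sp_{2n}(𝔽)` of `2n × 2n` matrices `M` with `M * J * Mᵀ = J`, where
`J = [[0, I_n], [-I_n, 0]]`, has order `q ^ (n ^ 2) * ∏_{i=1}^{n} (q ^ (2 i) - 1)`.
(This is the order formula `q ^ N * ∏ (q ^ dᵢ - 1)` for the split group of type `Cₙ`,
with exponents `dᵢ = 2, 4, …, 2n` and `N = n ^ 2` positive roots.) -/
theorem symplectic_group_card (q n : ℕ) (hn : 1 ≤ n)
    (𝔽 : Type*) [Field 𝔽] [Fintype 𝔽] (h𝔽 : Fintype.card 𝔽 = q) :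
    (Nat.card {M : Matrix (Fin n ⊕ Fin n) (Fin n ⊕ Fin n) 𝔽 //
        M * (Matrix.fromBlocks 0 1 (-1) 0) * M.transpose = Matrix.fromBlocks 0 1 (-1) 0} : ℤ) =
      (q : ℤ) ^ (n ^ 2) * ∏ i ∈ Finset.Icc 1 n, ((q : ℤ) ^ (2 * i) - 1) :=
  symplectic_group_card_general q n 𝔽 h𝔽
end

section
/- (Bruhat decomposition count.) Let 𝔽 be a finite field and n ≥ 1, let G = GL_n(𝔽), and let B ≤ G be the subgroup of invertible upper-triangular matrices. Then the number of double cosets B g B in G is n!. -/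
/-!
Left multiplication by `B` adds multiples of lower rows to higher rows. Whenever two rows of
`g` have their leading entries in the same column, clearing the higher one strictly enlarges
the set of leading zeros, so this terminates with leading entries in pairwise distinct columns;
then a row permutation of the result is upper triangular, i.e. `g ∈ B w B` for a permutation
matrix `w`. Conversely, if `w_τ = b w_σ b'` with `b, b' ∈ B`, the diagonal entry
`b'ᵢᵢ = (b⁻¹)_{σ i, τ i}` is nonzero, which forces `σ i ≤ τ i` for all `i` and hence `σ = τ`.
-/

open Matrix Equiv

namespace Equiv.Perm

variable {ι : Type*} [LinearOrder ι] [WellFoundedLT ι]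

theorem eq_one_of_forall_apply_le {ρ : Perm ι} (h : ∀ i, ρ i ≤ i) : ρ = 1 := by
  ext i
  induction i using WellFoundedLT.induction with
  | _ i ih => exact (h i).eq_or_lt.resolve_right fun hlt => hlt.ne (ρ.injective (ih _ hlt))

theorem eq_of_forall_apply_le {σ τ : Perm ι} (h : ∀ i, σ i ≤ τ i) : σ = τ :=
  mul_inv_eq_one.1 <| eq_one_of_forall_apply_le fun i => by simpa using h (τ⁻¹ i)

end Equiv.Perm

namespace Matrix

variable {ι : Type*} [Fintype ι] [LinearOrder ι]

theorem exists_perm_isUpperTriangular_submatrix {R : Type*} [Zero R] {M : Matrix ι ι R}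
    (hlead : ∀ r, ∃ c, M.IsLeadingEntry r c)
    (hinj : ∀ r r' c, M.IsLeadingEntry r c → M.IsLeadingEntry r' c → r = r') :
    ∃ σ : Perm ι, (M.submatrix σ id).IsUpperTriangular := by
  choose l hl using hlead
  have hbij : Function.Bijective l :=
    Finite.injective_iff_bijective.1 fun r r' e => hinj r r' (l r) (hl r) (e ▸ hl r')
  refine ⟨(Equiv.ofBijective l hbij).symm, fun i j hji => (hl _).1 j ?_⟩
  rwa [Equiv.ofBijective_apply_symm_apply l hbij]

variable {K : Type*} [Field K]

open scoped Classical in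
noncomputable def leadingZeros (M : Matrix ι ι K) : Finset (ι × ι) :=
  {p | ∀ c ≤ p.2, M p.1 c = 0}

theorem mem_leadingZeros {M : Matrix ι ι K} {r c : ι} :
    (r, c) ∈ leadingZeros M ↔ ∀ c' ≤ c, M r c' = 0 := by
  simp [leadingZeros]

theorem leadingZeros_ssubset_transvection_mul {M : Matrix ι ι K} {r r' c : ι} (hrr' : r ≠ r')
    (h : M.IsLeadingEntry r c) (h' : M.IsLeadingEntry r' c) :
    leadingZeros M ⊂ leadingZeros (transvection r r' (-(M r c / M r' c)) * M) := by
  have hcleared : ∀ x ≤ c, (transvection r r' (-(M r c / M r' c)) * M) r x = 0 := by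
    intro x hxc
    rw [transvection_mul_apply_same]
    rcases hxc.lt_or_eq with hlt | rfl
    · rw [h.1 x hlt, h'.1 x hlt, mul_zero, add_zero]
    · field_simp [h'.2]
      ring
  refine Finset.ssubset_iff_of_subset ?_ |>.2 ⟨(r, c), mem_leadingZeros.2 hcleared, ?_⟩
  · rintro ⟨y, x⟩ hyx
    rw [mem_leadingZeros] at hyx ⊢
    by_cases hy : y = r
    · subst hy
      have hxc : x < c := lt_of_not_ge fun hcx => h.2 (hyx c hcx)
      exact fun x' hx' => hcleared x' (hx'.trans hxc.le)
    · simpa [transvection_mul_apply_of_ne, hy] using hyx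
  · exact fun hmem => h.2 (mem_leadingZeros.1 hmem c le_rfl)

end Matrix

namespace Matrix.GeneralLinearGroup

variable {ι : Type*} [Fintype ι] [LinearOrder ι]

variable (ι) in
def upperTriangular (R : Type*) [CommRing R] : Subgroup (GL ι R) where
  carrier := {g | BlockTriangular (g : Matrix ι ι R) id}
  one_mem' := blockTriangular_one
  mul_mem' ha hb := ha.mul hb
  inv_mem' {g} hg := by
    have := g.invertible
    simpa [coe_units_inv] using blockTriangular_inv_of_blockTriangular hg

section CommRing

variable (R : Type*) [CommRing R]

abbrev permGL : Perm ι →* GL ι R :=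
  permMatrixHom.toHomUnits

variable {R}

theorem coe_permGL_mul (σ : Perm ι) (M : Matrix ι ι R) :
    (permGL R σ : Matrix ι ι R) * M = M.submatrix ⇑σ⁻¹ id :=
  PEquiv.toMatrix_toPEquiv_mul _ _

theorem mul_coe_permGL (σ : Perm ι) (M : Matrix ι ι R) :
    M * (permGL R σ : Matrix ι ι R) = M.submatrix id σ :=
  PEquiv.mul_toMatrix_toPEquiv _ _

theorem row_ne_zero [Nontrivial R] (g : GL ι R) (r : ι) : (g : Matrix ι ι R) r ≠ 0 :=
  fun h => g.det_ne_zero (det_eq_zero_of_row_eq_zero r (congrFun h))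

end CommRing

variable {K : Type*} [Field K]

theorem transvection_mem_upperTriangular {r r' : ι} (h : r < r') (c : K) :
    mkOfDetNeZero (transvection r r' c) (by simp [h.ne]) ∈ upperTriangular ι K :=
  blockTriangular_transvection h.le c

theorem diag_ne_zero_of_mem_upperTriangular {b : GL ι K} (hb : b ∈ upperTriangular ι K)
    (i : ι) : (b : Matrix ι ι K) i i ≠ 0 := by
  have hdet := b.det_ne_zero
  rw [det_of_isUpperTriangular hb] at hdet
  exact Finset.prod_ne_zero_iff.1 hdet i (Finset.mem_univ i)

theorem exists_perm_mul_mul_mem_upperTriangular (g : GL ι K) :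
    ∃ b ∈ upperTriangular ι K, ∃ σ : Perm ι, permGL K σ * (b * g) ∈ upperTriangular ι K := by
  induction g using
    (measure fun g : GL ι K => (leadingZeros (g : Matrix ι ι K))ᶜ.card).wf.induction with
  | _ g ih =>
  by_cases hcollision : ∃ r r' c, r < r' ∧ (g : Matrix ι ι K).IsLeadingEntry r c ∧
      (g : Matrix ι ι K).IsLeadingEntry r' c
  · obtain ⟨r, r', c, hlt, h, h'⟩ := hcollision
    set t := mkOfDetNeZero (transvection r r' (-((g : Matrix ι ι K) r c /
      (g : Matrix ι ι K) r' c))) (by simp [hlt.ne])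
    obtain ⟨b, hb, σ, hσ⟩ := ih (t * g) <| Finset.card_lt_card <|
      Finset.compl_ssubset_compl.2 (leadingZeros_ssubset_transvection_mul hlt.ne h h')
    exact ⟨b * t, mul_mem hb (transvection_mem_upperTriangular hlt _), σ, by rwa [mul_assoc b]⟩
  · obtain ⟨σ, hσ⟩ := exists_perm_isUpperTriangular_submatrix
      (fun r => row_ne_zero_iff_exists_isLeadingEntry.1 (row_ne_zero g r))
      fun r r' c h h' => by
        by_contra hne
        rcases lt_or_gt_of_ne hne with hlt | hlt
        · exact hcollision ⟨r, r', c, hlt, h, h'⟩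
        · exact hcollision ⟨r', r, c, hlt, h', h⟩
    refine ⟨1, one_mem _, σ⁻¹, ?_⟩
    show BlockTriangular _ id
    rwa [one_mul, Units.val_mul, coe_permGL_mul, inv_inv]

theorem mk_permGL_surjective :
    Function.Surjective fun σ : Perm ι =>
      DoubleCoset.mk (upperTriangular ι K) (upperTriangular ι K) (permGL K σ) := by
  intro q
  obtain ⟨b, hb, σ, hσ⟩ := exists_perm_mul_mul_mem_upperTriangular q.out
  refine ⟨σ⁻¹, ((DoubleCoset.eq _ _ _ _).2 ⟨b⁻¹, inv_mem hb, _, hσ, ?_⟩).trans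
    (DoubleCoset.out_eq' _ _ q)⟩
  simp [mul_assoc]

theorem mk_permGL_injective :
    Function.Injective fun σ : Perm ι =>
      DoubleCoset.mk (upperTriangular ι K) (upperTriangular ι K) (permGL K σ) := by
  intro σ τ h
  obtain ⟨b, hb, b', hb', heq⟩ := (DoubleCoset.eq _ _ _ _).1 h
  have hb'_eq : (b' : Matrix ι ι K) = ((b⁻¹ : GL ι K) : Matrix ι ι K).submatrix σ τ := by
    rw [show b' = permGL K σ⁻¹ * b⁻¹ * permGL K τ by rw [heq, map_inv]; group, Units.val_mul,
      Units.val_mul, coe_permGL_mul, inv_inv, mul_coe_permGL, submatrix_submatrix]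
    rfl
  refine Perm.eq_of_forall_apply_le fun i => not_lt.1 fun hlt => ?_
  apply diag_ne_zero_of_mem_upperTriangular hb' i
  rw [hb'_eq]
  exact inv_mem hb hlt

end Matrix.GeneralLinearGroup

theorem card_bruhat_double_cosets_general (𝔽 : Type*) [Field 𝔽] (n : ℕ) :
    Nat.card (DoubleCoset.Quotient
      {g : Matrix.GeneralLinearGroup (Fin n) 𝔽 |
        Matrix.BlockTriangular (g : Matrix (Fin n) (Fin n) 𝔽) id}
      {g : Matrix.GeneralLinearGroup (Fin n) 𝔽 |
        Matrix.BlockTriangular (g : Matrix (Fin n) (Fin n) 𝔽) id}) = Nat.factorial n := by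
  open Matrix.GeneralLinearGroup in
  calc _ = Nat.card (Perm (Fin n)) :=
        (Nat.card_eq_of_bijective _ ⟨mk_permGL_injective, mk_permGL_surjective⟩).symm
    _ = n.factorial := by rw [Nat.card_perm, Nat.card_fin]

/-- **Bruhat decomposition count.** Let `𝔽` be a finite field, `n ≥ 1`, `G = GL_n(𝔽)` and
`B ≤ G` the Borel subgroup of invertible upper-triangular matrices. Then the number of
double cosets `B g B` in `G` is `n!`. -/
theorem card_bruhat_double_cosets (𝔽 : Type*) [Field 𝔽] [Fintype 𝔽] (n : ℕ) (hn : 1 ≤ n) :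
    Nat.card (DoubleCoset.Quotient
      {g : Matrix.GeneralLinearGroup (Fin n) 𝔽 |
        Matrix.BlockTriangular (g : Matrix (Fin n) (Fin n) 𝔽) id}
      {g : Matrix.GeneralLinearGroup (Fin n) 𝔽 |
        Matrix.BlockTriangular (g : Matrix (Fin n) (Fin n) 𝔽) id}) = Nat.factorial n :=
  card_bruhat_double_cosets_general 𝔽 n
end

section
/- (Existence of the Steinberg representation of GL_n.) Let 𝔽 be a finite field with q elements, n ≥ 1, G = GL_n(𝔽), and B ≤ G the subgroup of invertible upper-triangular matrices. Then the permutation representation ℂ[G/B] of G has an irreducible subrepresentation of dimension q^{n(n−1)/2}. -/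
open Matrix

set_option synthInstance.maxHeartbeats 1000000
set_option maxHeartbeats 1000000

/-- The Borel subgroup of `GL_n(𝔽)` consisting of invertible upper-triangular
matrices. -/
def BorelGL (𝔽 : Type*) [Field 𝔽] (n : ℕ) : Subgroup (GL (Fin n) 𝔽) where
  carrier := {g | Matrix.BlockTriangular (g : Matrix (Fin n) (Fin n) 𝔽) id}
  one_mem' := by simpa using Matrix.blockTriangular_one (α := Fin n)
  mul_mem' := by
    intro a b ha hb
    simpa [Units.val_mul] using Matrix.BlockTriangular.mul ha hb
  inv_mem' := by
    intro a ha
    haveI : Invertible ((a : Matrix (Fin n) (Fin n) 𝔽)) := a.invertible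
    simpa [Matrix.coe_units_inv] using Matrix.blockTriangular_inv_of_blockTriangular ha

/-- The permutation representation of `G = GL_n(𝔽)` on `ℂ[G/B]`, realized as the space of
`ℂ`-valued functions on the coset space `G/B`, with `(g • f)(x) = f (g⁻¹ • x)`. This is
the representation `Ind_B^G 1` induced from the trivial representation of the Borel
subgroup `B`. -/
def permRep (𝔽 : Type*) [Field 𝔽] (n : ℕ) :
    Representation ℂ (GL (Fin n) 𝔽) ((GL (Fin n) 𝔽 ⧸ BorelGL 𝔽 n) → ℂ) where
  toFun g := LinearMap.funLeft ℂ ℂ fun x => g⁻¹ • x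
  map_one' := by
    refine LinearMap.ext fun f => funext fun x => ?_
    simp [LinearMap.funLeft_apply, inv_one, one_smul]
  map_mul' g h := by
    refine LinearMap.ext fun f => funext fun x => ?_
    simp [LinearMap.funLeft_apply, _root_.mul_inv_rev, mul_smul]

/-- A submodule `W` is invariant under a representation `ρ` if `ρ g` maps `W` into
itself for every `g`. -/
def RepInvariant {G V : Type*} [Group G] [AddCommGroup V] [Module ℂ V]
    (ρ : Representation ℂ G V) (W : Submodule ℂ V) : Prop :=
  ∀ g : G, ∀ v ∈ W, ρ g v ∈ W

/-- The subrepresentation of a representation `ρ` on an invariant submodule `W`. -/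
def subRep {G V : Type*} [Group G] [AddCommGroup V] [Module ℂ V]
    (ρ : Representation ℂ G V) (W : Submodule ℂ V) (h : RepInvariant ρ W) :
    Representation ℂ G W where
  toFun g := (ρ g).restrict fun v hv => h g v hv
  map_one' := by
    refine LinearMap.ext fun v => Subtype.ext ?_
    simp [LinearMap.restrict_apply]
  map_mul' g₁ g₂ := by
    refine LinearMap.ext fun v => Subtype.ext ?_
    simp [LinearMap.restrict_apply]

/-- A representation is irreducible if the underlying space is nonzero and its only
invariant subspaces are `⊥` and `⊤`. -/
def IsIrreducibleRep {G V : Type*} [Group G] [AddCommGroup V] [Module ℂ V]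
    (ρ : Representation ℂ G V) : Prop :=
  (⊥ : Submodule ℂ V) ≠ ⊤ ∧ ∀ W : Submodule ℂ V, RepInvariant ρ W → W = ⊥ ∨ W = ⊤

/-!
The Steinberg module is realised as the space `Z` of functions on flags whose sum over every
panel vanishes (the top homology of the Tits building). Restriction to the big cell of flags
opposite to the standard flag is an isomorphism. It is injective by straightening: at a flag
that is not opposite, an ascent of its relative position gives a panel relation expressing the
value there through flags with a smaller rank statistic. It is surjective because the
alternating sum over an apartment through a big-cell flag meets the big cell only at that
flag. The big cell is `U w₀ B` with `U` the unitriangular matrices, so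
`dim Z = q ^ (n (n - 1) / 2)`.

For irreducibility: every nonzero subrepresentation of `ℂ[G/B]` contains a nonzero `B`-fixed
vector, while a `B`-fixed vector of `Z` is constant on the big cell (on which `B` acts
transitively), hence determined by its value at `w₀ B`. By Maschke, two complementary
subrepresentations of `Z` would then share a fixed vector.
-/

attribute [local instance] Classical.propDecidable

section CoordinateSubspace

variable {K ι : Type*} [Field K]

variable (K) in
def coordSubspace (s : Finset ι) : Submodule K (ι → K) where
  carrier := {x | ∀ i ∉ s, x i = 0}
  add_mem' hx hy i hi := by simp [hx i hi, hy i hi]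
  zero_mem' _ _ := rfl
  smul_mem' c x hx i hi := by simp [hx i hi]

@[simp] lemma mem_coordSubspace {s : Finset ι} {x : ι → K} :
    x ∈ coordSubspace K s ↔ ∀ i ∉ s, x i = 0 := Iff.rfl

lemma coordSubspace_mono {s t : Finset ι} (h : s ⊆ t) : coordSubspace K s ≤ coordSubspace K t :=
  fun _ hx i hi => hx i fun his => hi (h his)

lemma coordSubspace_inf [DecidableEq ι] (s t : Finset ι) :
    coordSubspace K s ⊓ coordSubspace K t = coordSubspace K (s ∩ t) := by
  ext x
  simp only [Submodule.mem_inf, mem_coordSubspace, Finset.mem_inter, not_and_or]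
  exact ⟨fun h i hi => hi.elim (h.1 i) (h.2 i), fun h => ⟨fun i hi => h i (.inl hi),
    fun i hi => h i (.inr hi)⟩⟩

lemma single_mem_coordSubspace [DecidableEq ι] {s : Finset ι} {i : ι} (hi : i ∈ s) :
    Pi.single i 1 ∈ coordSubspace K s :=
  fun _ hj => Pi.single_eq_of_ne (by rintro rfl; exact hj hi) _

lemma coordSubspace_eq_bot_iff {s : Finset ι} : coordSubspace K s = ⊥ ↔ s = ∅ := by
  classical
  refine ⟨fun h => Finset.eq_empty_of_forall_notMem fun i hi => ?_, fun h => ?_⟩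
  · have := h ▸ single_mem_coordSubspace (K := K) hi
    simpa using congrFun ((Submodule.mem_bot K).1 this) i
  · subst h
    exact (Submodule.eq_bot_iff _).2 fun x hx => funext fun i => hx i (Finset.notMem_empty i)

lemma finrank_coordSubspace [Fintype ι] [DecidableEq ι] (s : Finset ι) :
    Module.finrank K (coordSubspace K s) = s.card := by
  let r := LinearMap.funLeft K K ((↑) : (sᶜ : Finset ι) → ι)
  have hker : LinearMap.ker r = coordSubspace K s := by
    ext x
    simp only [LinearMap.mem_ker, mem_coordSubspace, funext_iff, r, LinearMap.funLeft_apply,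
      Pi.zero_apply, Subtype.forall, Finset.mem_compl]
  have := r.finrank_range_add_finrank_ker
  rw [LinearMap.range_eq_top.2 (LinearMap.funLeft_surjective_of_injective _ _ _
    Subtype.val_injective), finrank_top, hker] at this
  simp only [Module.finrank_fintype_fun_eq_card, Fintype.card_coe, Finset.card_compl] at this
  have := s.card_le_univ
  omega

lemma coordSubspace_eq_span [DecidableEq ι] [Fintype ι] (s : Finset ι) :
    coordSubspace K s = Submodule.span K ((fun i => Pi.single i 1) '' s) := by
  refine le_antisymm (fun x hx => ?_) (Submodule.span_le.2 ?_)
  · rw [← Finset.univ_sum_single x]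
    refine Submodule.sum_mem _ fun i _ => ?_
    by_cases hi : i ∈ s
    · rw [← mul_one (x i), ← smul_eq_mul, Pi.single_smul']
      exact Submodule.smul_mem _ _ (Submodule.subset_span ⟨i, hi, rfl⟩)
    · rw [hx i hi, Pi.single_zero]
      exact Submodule.zero_mem _
  · rintro - ⟨i, hi, rfl⟩
    exact single_mem_coordSubspace hi

end CoordinateSubspace

section Finrank

variable {K V : Type*} [DivisionRing K] [AddCommGroup V] [Module K V] [FiniteDimensional K V]

open Module

lemma finrank_inf_sup_add_finrank_inf {p q : Submodule K V} (hpq : p ≤ q) (r : Submodule K V) :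
    finrank K ↥(q ⊓ (p ⊔ r)) + finrank K ↥(p ⊓ r) = finrank K p + finrank K ↥(q ⊓ r) := by
  have hmod : q ⊓ (p ⊔ r) = p ⊔ q ⊓ r := by rw [inf_comm, sup_inf_assoc_of_le r hpq, inf_comm]
  have hinf : p ⊓ (q ⊓ r) = p ⊓ r := by rw [← inf_assoc, inf_eq_left.2 hpq]
  rw [hmod, ← hinf]
  exact Submodule.finrank_sup_add_finrank_inf_eq p (q ⊓ r)

lemma finrank_inf_eq_of_finrank_eq_succ {p q : Submodule K V} (hpq : p ≤ q)
    (hq : finrank K q = finrank K p + 1) (r : Submodule K V) :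
    finrank K ↥(q ⊓ r) = finrank K ↥(p ⊓ r) + if q ≤ p ⊔ r then 1 else 0 := by
  have key := finrank_inf_sup_add_finrank_inf hpq r
  have hp : finrank K p ≤ finrank K ↥(q ⊓ (p ⊔ r)) :=
    Submodule.finrank_mono (le_inf hpq le_sup_left)
  split_ifs with h
  · rw [inf_eq_left.2 h] at key
    omega
  · have : q ⊓ (p ⊔ r) < q := inf_lt_left.2 h
    have := Submodule.finrank_lt_finrank_of_lt this
    omega

end Finrank

section Irreducibility

variable {G V : Type*} [Group G] [AddCommGroup V] [Module ℂ V] (ρ : Representation ℂ G V)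

lemma isIrreducibleRep_subRep {Z : Submodule ℂ V} (hZ : RepInvariant ρ Z) (hZ₀ : Z ≠ ⊥)
    (h : ∀ W ≤ Z, RepInvariant ρ W → W = ⊥ ∨ W = Z) : IsIrreducibleRep (subRep ρ Z hZ) := by
  refine ⟨fun hbot => hZ₀ ?_, fun W hW => ?_⟩
  · rw [← Z.map_subtype_top, ← hbot, Submodule.map_bot]
  · have hmap : RepInvariant ρ (W.map Z.subtype) := by
      rintro g - ⟨w, hw, rfl⟩
      exact ⟨_, hW g w hw, rfl⟩
    refine (h _ (Submodule.map_subtype_le Z W) hmap).imp (fun hb => ?_) (fun ht => ?_)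
    all_goals refine Submodule.map_injective_of_injective Z.injective_subtype ?_
    · rw [hb, Submodule.map_bot]
    · rw [ht, Z.map_subtype_top]

lemma exists_repInvariant_compl_of_le [Finite G] {W Z : Submodule ℂ V}
    (hW : RepInvariant ρ W) (hZ : RepInvariant ρ Z) (hWZ : W ≤ Z) :
    ∃ Q ≤ Z, RepInvariant ρ Q ∧ W ⊓ Q = ⊥ ∧ W ⊔ Q = Z := by
  obtain ⟨Q, hQ⟩ := exists_isCompl (Subrepresentation.mk W fun g v hv => hW g v hv)
  have hinf : W ⊓ Q.toSubmodule = ⊥ := congrArg Subrepresentation.toSubmodule hQ.inf_eq_bot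
  have hsup : W ⊔ Q.toSubmodule = ⊤ := congrArg Subrepresentation.toSubmodule hQ.sup_eq_top
  refine ⟨Q.toSubmodule ⊓ Z, inf_le_right, fun g v hv => ⟨Q.apply_mem_toSubmodule g hv.1,
    hZ g v hv.2⟩, ?_, ?_⟩
  · rw [← inf_assoc, hinf, bot_inf_eq]
  · rw [← sup_inf_assoc_of_le _ hWZ, hsup, top_inf_eq]

/-- The vector `φ w • v - φ v • w` is `H`-fixed and killed by `φ`. -/
lemma smul_eq_smul_of_fixed (H : Subgroup G) {Z : Submodule ℂ V} (φ : V →ₗ[ℂ] ℂ)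
    (hφ : ∀ v ∈ Z, (∀ h ∈ H, ρ h v = v) → φ v = 0 → v = 0) {v w : V} (hvZ : v ∈ Z) (hwZ : w ∈ Z)
    (hv : ∀ h ∈ H, ρ h v = v) (hw : ∀ h ∈ H, ρ h w = w) : φ w • v = φ v • w := by
  refine sub_eq_zero.1 (hφ _ (Z.sub_mem (Z.smul_mem _ hvZ) (Z.smul_mem _ hwZ)) (fun h hh => ?_) ?_)
  · rw [map_sub, map_smul, map_smul, hv h hh, hw h hh]
  · simp only [map_sub, map_smul, smul_eq_mul, mul_comm, sub_self]

theorem isIrreducibleRep_subRep_of_fixed [Finite G] (H : Subgroup G) {Z : Submodule ℂ V}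
    (hZ : RepInvariant ρ Z) (hZ₀ : Z ≠ ⊥)
    (hfix : ∀ W ≤ Z, RepInvariant ρ W → W ≠ ⊥ → ∃ v ∈ W, v ≠ 0 ∧ ∀ h ∈ H, ρ h v = v)
    (φ : V →ₗ[ℂ] ℂ) (hφ : ∀ v ∈ Z, (∀ h ∈ H, ρ h v = v) → φ v = 0 → v = 0) :
    IsIrreducibleRep (subRep ρ Z hZ) := by
  refine isIrreducibleRep_subRep ρ hZ hZ₀ fun W hWZ hW => or_iff_not_imp_left.2 fun hW₀ => ?_
  obtain ⟨Q, hQZ, hQ, hWQ, hWQZ⟩ := exists_repInvariant_compl_of_le ρ hW hZ hWZ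
  by_contra hWZ'
  have hQ₀ : Q ≠ ⊥ := fun h => hWZ' (by rw [← hWQZ, h, sup_bot_eq])
  obtain ⟨v, hvW, hv₀, hv⟩ := hfix W hWZ hW hW₀
  obtain ⟨w, hwQ, hw₀, hw⟩ := hfix Q hQZ hQ hQ₀
  have hφw : φ w ≠ 0 := fun h => hw₀ (hφ w (hQZ hwQ) hw h)
  have hmem : φ w • v ∈ W ⊓ Q := ⟨W.smul_mem _ hvW, by
    rw [smul_eq_smul_of_fixed ρ H φ hφ (hWZ hvW) (hQZ hwQ) hv hw]; exact Q.smul_mem _ hwQ⟩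
  rw [hWQ, Submodule.mem_bot, smul_eq_zero] at hmem
  exact hmem.elim hφw hv₀

lemma Representation.apply_sum_subgroup {G V : Type*} [Group G] [AddCommGroup V] [Module ℂ V]
    (ρ : Representation ℂ G V) (H : Subgroup G) [Fintype H] (v : V) {h : G} (hh : h ∈ H) :
    ρ h (∑ b : H, ρ b v) = ∑ b : H, ρ b v := by
  rw [map_sum]
  refine Fintype.sum_equiv (Equiv.mulLeft ⟨h, hh⟩) _ _ fun b => ?_
  rw [Equiv.coe_mulLeft, Subgroup.coe_mul, map_mul, Module.End.mul_apply]

end Irreducibility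

namespace Steinberg

section Flags

variable {𝔽 : Type*} [Field 𝔽] {n : ℕ}

variable (𝔽 n) in
def stdFlag (i : ℕ) : Submodule 𝔽 (Fin n → 𝔽) :=
  coordSubspace 𝔽 {k : Fin n | (k : ℕ) < i}

lemma mem_stdFlag {i : ℕ} {x : Fin n → 𝔽} : x ∈ stdFlag 𝔽 n i ↔ ∀ k : Fin n, i ≤ k → x k = 0 := by
  simp [stdFlag]

lemma stdFlag_zero : stdFlag 𝔽 n 0 = ⊥ := by
  simp [stdFlag, coordSubspace_eq_bot_iff]

lemma stdFlag_of_le {i : ℕ} (h : n ≤ i) : stdFlag 𝔽 n i = ⊤ :=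
  eq_top_iff.2 fun _ _ => mem_stdFlag.2 fun k hk => absurd (k.2.trans_le (h.trans hk)) (lt_irrefl _)

lemma stdFlag_mono : Monotone (stdFlag 𝔽 n) := fun _ _ h =>
  coordSubspace_mono fun k => by simpa using fun hk => hk.trans_le h

lemma finrank_stdFlag (i : ℕ) : Module.finrank 𝔽 (stdFlag 𝔽 n i) = min n i := by
  rw [stdFlag, finrank_coordSubspace, Fin.card_filter_val_lt]

def glEquiv (g : GL (Fin n) 𝔽) : (Fin n → 𝔽) ≃ₗ[𝔽] (Fin n → 𝔽) :=
  (Matrix.GeneralLinearGroup.toLin g).toLinearEquiv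

@[simp] lemma glEquiv_apply (g : GL (Fin n) 𝔽) (v : Fin n → 𝔽) :
    glEquiv g v = (g : Matrix (Fin n) (Fin n) 𝔽) *ᵥ v := rfl

lemma map_glEquiv_mul (g h : GL (Fin n) 𝔽) (p : Submodule 𝔽 (Fin n → 𝔽)) :
    p.map (glEquiv (g * h)).toLinearMap =
      (p.map (glEquiv h).toLinearMap).map (glEquiv g).toLinearMap := by
  rw [← Submodule.map_comp]
  congr 1
  exact LinearMap.ext fun v => by simp [Matrix.mulVec_mulVec]

@[simp] lemma map_glEquiv_one (p : Submodule 𝔽 (Fin n → 𝔽)) :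
    p.map (glEquiv 1).toLinearMap = p := by
  convert p.map_id
  exact LinearMap.ext fun v => by simp

lemma map_stdFlag_le_of_blockTriangular {A : Matrix (Fin n) (Fin n) 𝔽}
    (hA : A.BlockTriangular id) (i : ℕ) : (stdFlag 𝔽 n i).map A.mulVecLin ≤ stdFlag 𝔽 n i := by
  rintro - ⟨x, hx, rfl⟩
  refine mem_stdFlag.2 fun k hk => show ∑ m, A k m * x m = 0 from Finset.sum_eq_zero fun m _ => ?_
  by_cases hm : (m : ℕ) < i
  · rw [hA (show id m < id k from Fin.lt_def.2 (hm.trans_le hk)), zero_mul]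
  · rw [mem_stdFlag.1 hx m (not_lt.1 hm), mul_zero]

lemma map_stdFlag_of_mem_borel {b : GL (Fin n) 𝔽} (hb : b ∈ BorelGL 𝔽 n) (i : ℕ) :
    (stdFlag 𝔽 n i).map (glEquiv b).toLinearMap = stdFlag 𝔽 n i := by
  refine le_antisymm (map_stdFlag_le_of_blockTriangular hb i) fun x hx => ?_
  have hinv := map_stdFlag_le_of_blockTriangular ((BorelGL 𝔽 n).inv_mem hb) i ⟨x, hx, rfl⟩
  refine ⟨_, hinv, ?_⟩
  simp [Matrix.mulVec_mulVec]

lemma mem_borel_of_map_stdFlag {g : GL (Fin n) 𝔽}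
    (hg : ∀ i, (stdFlag 𝔽 n i).map (glEquiv g).toLinearMap = stdFlag 𝔽 n i) : g ∈ BorelGL 𝔽 n := by
  intro i j hij
  have hcol : glEquiv g (Pi.single j 1) ∈ stdFlag 𝔽 n (j + 1) :=
    hg (j + 1) ▸ ⟨_, single_mem_coordSubspace (by simp), rfl⟩
  simpa [Matrix.mulVec_single_one] using mem_stdFlag.1 hcol i hij

local notation "X" => GL (Fin n) 𝔽 ⧸ BorelGL 𝔽 n

def flag (x : X) (i : ℕ) : Submodule 𝔽 (Fin n → 𝔽) :=
  Quotient.liftOn' x (fun g => (stdFlag 𝔽 n i).map (glEquiv g).toLinearMap) fun g g' h => by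
    rw [show g' = g * (g⁻¹ * g') by group, map_glEquiv_mul,
      map_stdFlag_of_mem_borel (QuotientGroup.leftRel_apply.1 h)]

lemma flag_mk (g : GL (Fin n) 𝔽) (i : ℕ) :
    flag (g : X) i = (stdFlag 𝔽 n i).map (glEquiv g).toLinearMap := rfl

lemma flag_smul (g : GL (Fin n) 𝔽) (x : X) (i : ℕ) :
    flag (g • x) i = (flag x i).map (glEquiv g).toLinearMap := by
  induction x using QuotientGroup.induction_on with
  | H k => rw [MulAction.Quotient.smul_mk, flag_mk, flag_mk, smul_eq_mul, map_glEquiv_mul]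

lemma flag_of_le (x : X) {i : ℕ} (h : n ≤ i) : flag x i = ⊤ := by
  induction x using QuotientGroup.induction_on with
  | H k => rw [flag_mk, stdFlag_of_le h, Submodule.map_top, LinearEquiv.range]

lemma flag_zero (x : X) : flag x 0 = ⊥ := by
  induction x using QuotientGroup.induction_on with
  | H k => rw [flag_mk, stdFlag_zero, Submodule.map_bot]

lemma flag_mono (x : X) : Monotone (flag x) := by
  induction x using QuotientGroup.induction_on with
  | H k => exact fun _ _ h => Submodule.map_mono (stdFlag_mono h)

lemma finrank_flag (x : X) {i : ℕ} (h : i ≤ n) : Module.finrank 𝔽 (flag x i) = i := by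
  induction x using QuotientGroup.induction_on with
  | H k => rw [flag_mk, LinearEquiv.finrank_map_eq, finrank_stdFlag, min_eq_right h]

lemma eq_of_flag_eq {x y : X} (h : ∀ i, flag x i = flag y i) : x = y := by
  induction x using QuotientGroup.induction_on with
  | H g =>
  induction y using QuotientGroup.induction_on with
  | H g' =>
  refine QuotientGroup.eq.2 (mem_borel_of_map_stdFlag fun i => ?_)
  rw [map_glEquiv_mul, ← flag_mk, ← h, flag_mk, ← map_glEquiv_mul, inv_mul_cancel,
    map_glEquiv_one]

end Flags

section RelativePosition

variable {𝔽 : Type*} [Field 𝔽] {n : ℕ}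

local notation "X" => GL (Fin n) 𝔽 ⧸ BorelGL 𝔽 n

open Module

noncomputable def meetRank (x : X) (i j : ℕ) : ℕ := finrank 𝔽 ↥(flag x i ⊓ stdFlag 𝔽 n j)

lemma meetRank_zero_left (x : X) (j : ℕ) : meetRank x 0 j = 0 := by
  simp [meetRank, flag_zero]

lemma meetRank_mono_right (x : X) (i : ℕ) : Monotone (meetRank x i) := fun _ _ h =>
  Submodule.finrank_mono (inf_le_inf_left _ (stdFlag_mono h))

lemma meetRank_succ_right_le (x : X) (i j : ℕ) : meetRank x i (j + 1) ≤ meetRank x i j + 1 := by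
  have h := finrank_inf_sup_add_finrank_inf (stdFlag_mono (Nat.le_add_right j 1)) (flag x i)
  have hle := Submodule.finrank_mono
    (inf_le_left : stdFlag 𝔽 n (j + 1) ⊓ (stdFlag 𝔽 n j ⊔ flag x i) ≤ _)
  rw [finrank_stdFlag] at h hle
  rw [meetRank, meetRank, inf_comm, inf_comm (flag x i)]
  omega

lemma exists_flag_succ_le_sup_stdFlag (x : X) (i : ℕ) :
    ∃ j, flag x (i + 1) ≤ flag x i ⊔ stdFlag 𝔽 n j :=
  ⟨n, by simp [stdFlag_of_le le_rfl]⟩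

/-- For `i < n` these are `w 0 + 1, …, w (n - 1) + 1`, where the permutation `w` is the
relative position (Bruhat cell) of `x` with respect to the standard flag. -/
noncomputable def jumpIndex (x : X) (i : ℕ) : ℕ := Nat.find (exists_flag_succ_le_sup_stdFlag x i)

lemma jumpIndex_le_iff {x : X} {i j : ℕ} :
    jumpIndex x i ≤ j ↔ flag x (i + 1) ≤ flag x i ⊔ stdFlag 𝔽 n j := by
  refine ⟨fun h => (Nat.find_spec (exists_flag_succ_le_sup_stdFlag x i)).trans
    (sup_le_sup_left (stdFlag_mono h) _), fun h => Nat.find_le h⟩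

lemma jumpIndex_le (x : X) (i : ℕ) : jumpIndex x i ≤ n :=
  jumpIndex_le_iff.2 (by simp [stdFlag_of_le le_rfl])

lemma one_le_jumpIndex (x : X) {i : ℕ} (hi : i < n) : 1 ≤ jumpIndex x i := by
  by_contra h
  have hle := Submodule.finrank_mono (jumpIndex_le_iff.1 (Nat.lt_one_iff.1 (not_le.1 h)).le)
  rw [stdFlag_zero, sup_bot_eq, finrank_flag x hi, finrank_flag x hi.le] at hle
  omega

lemma meetRank_succ_left (x : X) {i : ℕ} (hi : i < n) (j : ℕ) :
    meetRank x (i + 1) j = meetRank x i j + if jumpIndex x i ≤ j then 1 else 0 := by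
  simp only [meetRank, jumpIndex_le_iff]
  exact finrank_inf_eq_of_finrank_eq_succ (flag_mono x (Nat.le_succ i))
    (by rw [finrank_flag x hi, finrank_flag x hi.le]) _

lemma meetRank_eq_card (x : X) (j : ℕ) {i : ℕ} (hi : i ≤ n) :
    meetRank x i j = ((Finset.range i).filter fun k => jumpIndex x k ≤ j).card := by
  induction i with
  | zero => simp [meetRank_zero_left]
  | succ i ih =>
    rw [meetRank_succ_left x hi, ih (Nat.le_of_succ_le hi), Finset.range_add_one,
      Finset.filter_insert]
    split_ifs <;> simp [Finset.card_insert_of_notMem]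

lemma jumpIndex_ne_jumpIndex_succ (x : X) {i : ℕ} (hi : i + 1 < n) :
    jumpIndex x i ≠ jumpIndex x (i + 1) := by
  intro heq
  obtain ⟨j, hj⟩ := Nat.exists_eq_add_of_le' (one_le_jumpIndex x (i.lt_succ_self.trans hi))
  have e₁ := meetRank_succ_left x (i.lt_succ_self.trans hi) (j + 1)
  have e₂ := meetRank_succ_left x hi (j + 1)
  have e₃ := meetRank_succ_left x (i.lt_succ_self.trans hi) j
  have e₄ := meetRank_succ_left x hi j
  have := meetRank_succ_right_le x (i + 1 + 1) j
  have := meetRank_mono_right x i (Nat.le_add_right j 1)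
  simp only [← heq, hj, le_refl, if_true, Nat.not_succ_le_self, if_false] at e₁ e₂ e₃ e₄
  omega

def IsOpposite (x : X) : Prop := ∀ i, flag x i ⊓ stdFlag 𝔽 n (n - i) = ⊥

lemma sub_le_jumpIndex_of_antitone {x : X}
    (h : ∀ i, i + 1 < n → jumpIndex x (i + 1) < jumpIndex x i) {k : ℕ} (hk : k < n) :
    n - k ≤ jumpIndex x k := by
  obtain ⟨m, hm⟩ := Nat.exists_eq_add_of_lt hk
  induction m generalizing k with
  | zero => have := one_le_jumpIndex x hk; omega
  | succ m ih =>
    have := ih (k := k + 1) (by omega) (by omega)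
    have := h k (by omega)
    omega

lemma isOpposite_of_antitone {x : X}
    (h : ∀ i, i + 1 < n → jumpIndex x (i + 1) < jumpIndex x i) : IsOpposite x := by
  intro i
  rcases le_or_gt n i with hi | hi
  · rw [Nat.sub_eq_zero_of_le hi, stdFlag_zero, inf_bot_eq]
  refine Submodule.finrank_eq_zero.1 ((meetRank_eq_card x _ hi.le).trans ?_)
  refine Finset.card_eq_zero.2 (Finset.filter_eq_empty_iff.2 fun k hk => ?_)
  have := sub_le_jumpIndex_of_antitone h ((Finset.mem_range.1 hk).trans hi)
  have := Finset.mem_range.1 hk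
  omega

lemma exists_jumpIndex_lt_succ_of_not_isOpposite {x : X} (h : ¬ IsOpposite x) :
    ∃ i, i + 1 < n ∧ jumpIndex x i < jumpIndex x (i + 1) := by
  by_contra! hc
  exact h (isOpposite_of_antitone fun i hi =>
    (hc i hi).lt_of_ne (jumpIndex_ne_jumpIndex_succ x hi).symm)

end RelativePosition

section Adjacency

variable {𝔽 : Type*} [Field 𝔽] {n : ℕ}

local notation "X" => GL (Fin n) 𝔽 ⧸ BorelGL 𝔽 n

open Module

/-- `x` and `y` lie in a common `i`-panel. -/
def IsAdjacent (i : ℕ) (x y : X) : Prop := ∀ k ≠ i + 1, flag x k = flag y k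

lemma IsAdjacent.refl (i : ℕ) (x : X) : IsAdjacent i x x := fun _ _ => rfl

lemma IsAdjacent.symm {i : ℕ} {x y : X} (h : IsAdjacent i x y) : IsAdjacent i y x :=
  fun k hk => (h k hk).symm

lemma IsAdjacent.trans {i : ℕ} {x y z : X} (h : IsAdjacent i x y) (h' : IsAdjacent i y z) :
    IsAdjacent i x z := fun k hk => (h k hk).trans (h' k hk)

lemma isAdjacent_smul_iff {i : ℕ} (g : GL (Fin n) 𝔽) {x y : X} :
    IsAdjacent i (g • x) (g • y) ↔ IsAdjacent i x y := by
  simp only [IsAdjacent, flag_smul,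
    (Submodule.map_injective_of_injective (glEquiv g).injective).eq_iff]

/-- `K = flag x (i + 2) ⊓ (flag x i ⊔ stdFlag c)` contains `flag y (i + 1)` and has dimension
`i + 1` only if `jumpIndex x i ≤ c`; then it also contains `flag x (i + 1)`, forcing
`flag x (i + 1) = K = flag y (i + 1)`. -/
lemma jumpIndex_succ_le_of_isAdjacent {i : ℕ} (hi : i + 1 < n) {x y : X} (hxy : IsAdjacent i x y)
    (hne : flag x (i + 1) ≠ flag y (i + 1)) : jumpIndex x (i + 1) ≤ jumpIndex y i := by
  by_contra! hc
  set c := jumpIndex y i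
  have hK : finrank 𝔽 ↥(flag x (i + 1 + 1) ⊓ (flag x i ⊔ stdFlag 𝔽 n c)) + meetRank x i c =
      i + meetRank x (i + 1 + 1) c := by
    have := finrank_inf_sup_add_finrank_inf (flag_mono x (by omega : i ≤ i + 1 + 1))
      (stdFlag 𝔽 n c)
    rwa [finrank_flag x (by omega)] at this
  set K := flag x (i + 1 + 1) ⊓ (flag x i ⊔ stdFlag 𝔽 n c)
  have e₁ := meetRank_succ_left x (Nat.lt_of_succ_lt hi) c
  have e₂ := meetRank_succ_left x hi c
  rw [if_neg (not_le.2 hc)] at e₂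
  have hyK : flag y (i + 1) ≤ K := by
    refine le_inf ?_ ?_
    · rw [hxy (i + 1 + 1) (by omega)]; exact flag_mono y (by omega)
    · rw [hxy i (by omega)]; exact jumpIndex_le_iff.1 le_rfl
  have hdim := Submodule.finrank_mono hyK
  rw [finrank_flag y hi.le] at hdim
  by_cases hac : jumpIndex x i ≤ c
  · rw [if_pos hac] at e₁
    have hxK : flag x (i + 1) ≤ K := le_inf (flag_mono x (by omega)) (jumpIndex_le_iff.1 hac)
    have hKx := Submodule.eq_of_le_of_finrank_le hxK (by rw [finrank_flag x hi.le]; omega)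
    have hKy := Submodule.eq_of_le_of_finrank_le hyK (by rw [finrank_flag y hi.le]; omega)
    exact hne (hKx.trans hKy.symm)
  · rw [if_neg hac] at e₁
    omega

noncomputable def meetRankSum (x : X) : ℕ :=
  ∑ k ∈ Finset.range (n + 1), ∑ j ∈ Finset.range (n + 1), meetRank x k j

/-- Only row `i + 1` of the rank table changes, and it drops at column `jumpIndex x i`. -/
lemma meetRankSum_lt_of_isAdjacent {i : ℕ} (hi : i + 1 < n) {x y : X} (hxy : IsAdjacent i x y)
    (hne : flag x (i + 1) ≠ flag y (i + 1)) (hasc : jumpIndex x i < jumpIndex x (i + 1)) :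
    meetRankSum y < meetRankSum x := by
  have hle := (jumpIndex_succ_le_of_isAdjacent hi hxy hne).trans' hasc
  have hrow (j : ℕ) : meetRank y (i + 1) j +
      (if jumpIndex x i ≤ j ∧ j < jumpIndex y i then 1 else 0) = meetRank x (i + 1) j := by
    rw [meetRank_succ_left x (by omega), meetRank_succ_left y (by omega),
      show meetRank y i j = meetRank x i j by rw [meetRank, meetRank, hxy i (by omega)]]
    split_ifs <;> omega
  have hrows (k : ℕ) (hk : k ≠ i + 1) (j : ℕ) : meetRank y k j = meetRank x k j := by
    rw [meetRank, meetRank, hxy k hk]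
  refine Finset.sum_lt_sum (fun k _ => Finset.sum_le_sum fun j _ => ?_)
    ⟨i + 1, Finset.mem_range.2 (by omega), Finset.sum_lt_sum (fun j _ => ?_)
      ⟨jumpIndex x i, Finset.mem_range.2 (by have := jumpIndex_le x i; omega), ?_⟩⟩
  · rcases eq_or_ne k (i + 1) with rfl | hk
    · exact (hrow j).le.trans' (Nat.le_add_right _ _)
    · rw [hrows k hk]
  · exact (hrow j).le.trans' (Nat.le_add_right _ _)
  · rw [← hrow, if_pos ⟨le_rfl, hle⟩]
    exact Nat.lt_succ_self _

end Adjacency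

lemma permRep_apply {𝔽 : Type*} [Field 𝔽] {n : ℕ} (g : GL (Fin n) 𝔽)
    (f : (GL (Fin n) 𝔽 ⧸ BorelGL 𝔽 n) → ℂ) (x : GL (Fin n) 𝔽 ⧸ BorelGL 𝔽 n) :
    permRep 𝔽 n g f x = f (g⁻¹ • x) := rfl

section SteinbergSpace

variable {𝔽 : Type*} [Field 𝔽] [Fintype 𝔽] {n : ℕ}

local notation "X" => GL (Fin n) 𝔽 ⧸ BorelGL 𝔽 n

variable (𝔽 n) in
noncomputable def steinbergSpace : Submodule ℂ (X → ℂ) where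
  carrier := {f | ∀ i, i + 1 < n → ∀ x, ∑ y with IsAdjacent i x y, f y = 0}
  add_mem' hf hg i hi x := by simp [Finset.sum_add_distrib, hf i hi x, hg i hi x]
  zero_mem' _ _ _ := by simp
  smul_mem' c f hf i hi x := by simp [← Finset.mul_sum, hf i hi x]

lemma steinbergSpace_invariant : RepInvariant (permRep 𝔽 n) (steinbergSpace 𝔽 n) := by
  intro g f hf i hi x
  rw [← hf i hi (g⁻¹ • x), Finset.sum_filter, Finset.sum_filter]
  refine Fintype.sum_equiv (MulAction.toPerm g⁻¹) _ _ fun y => ?_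
  rw [MulAction.toPerm_apply, ← isAdjacent_smul_iff g⁻¹, permRep_apply]

theorem eq_zero_of_forall_isOpposite {f : X → ℂ} (hf : f ∈ steinbergSpace 𝔽 n)
    (h₀ : ∀ x : X, IsOpposite x → f x = 0) : f = 0 := by
  suffices h : ∀ N x, meetRankSum x = N → f x = 0 from funext fun x => h _ x rfl
  intro N
  induction N using Nat.strong_induction_on with
  | _ N ih =>
  intro x hx
  by_cases hopp : IsOpposite x
  · exact h₀ x hopp
  obtain ⟨i, hi, hasc⟩ := exists_jumpIndex_lt_succ_of_not_isOpposite hopp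
  rw [← hf i hi x, Finset.sum_eq_single_of_mem x (by simpa using IsAdjacent.refl i x)]
  intro y hy hyx
  have hxy : IsAdjacent i x y := (Finset.mem_filter.1 hy).2
  have hne : flag x (i + 1) ≠ flag y (i + 1) := fun h => hyx (eq_of_flag_eq fun k => by
    rcases eq_or_ne k (i + 1) with rfl | hk
    exacts [h.symm, (hxy k hk).symm])
  exact ih _ (hx ▸ meetRankSum_lt_of_isAdjacent hi hxy hne hasc) y rfl

end SteinbergSpace

section Apartments

variable {𝔽 : Type*} [Field 𝔽] {n : ℕ}

local notation "X" => GL (Fin n) 𝔽 ⧸ BorelGL 𝔽 n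

variable (𝔽) in
/-- Permutation matrices, normalised so that `permGL σ` sends `Pi.single k 1` to
`Pi.single (σ k) 1`. -/
def permGL : Equiv.Perm (Fin n) →* GL (Fin n) 𝔽 :=
  (Matrix.permMatrixHom (R := 𝔽)).toHomUnits

lemma map_permGL_coordSubspace (σ : Equiv.Perm (Fin n)) (s : Finset (Fin n)) :
    (coordSubspace 𝔽 s).map (glEquiv (permGL 𝔽 σ)).toLinearMap = coordSubspace 𝔽 (s.image σ) := by
  have happly (v : Fin n → 𝔽) : glEquiv (permGL 𝔽 σ) v = v ∘ σ.symm :=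
    Matrix.permMatrix_mulVec (σ := σ⁻¹)
  ext y
  simp only [Submodule.mem_map, LinearEquiv.coe_coe, happly, mem_coordSubspace,
    Finset.mem_image, not_exists, not_and]
  refine ⟨?_, fun hy => ⟨y ∘ σ, fun k hk => hy _ fun m hm hmk => hk (σ.injective hmk ▸ hm),
    by ext; simp⟩⟩
  rintro ⟨v, hv, rfl⟩ m hm
  exact hv _ fun hs => hm _ hs (σ.apply_symm_apply m)

lemma flag_mul_permGL (g : GL (Fin n) 𝔽) (σ : Equiv.Perm (Fin n)) (i : ℕ) :
    flag ((g * permGL 𝔽 σ : GL (Fin n) 𝔽) : X) i =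
      (coordSubspace 𝔽 (({k : Fin n | (k : ℕ) < i} : Finset (Fin n)).image σ)).map
        (glEquiv g).toLinearMap := by
  rw [flag_mk, map_glEquiv_mul, stdFlag, map_permGL_coordSubspace]

lemma swap_val_lt_iff {i k : ℕ} (hi : i + 1 < n) (hk : k ≠ i + 1) (m : Fin n) :
    ((Equiv.swap (⟨i, by omega⟩ : Fin n) ⟨i + 1, hi⟩ m : Fin n) : ℕ) < k ↔ (m : ℕ) < k := by
  rcases eq_or_ne m ⟨i, by omega⟩ with rfl | h₁
  · simp only [Equiv.swap_apply_left]; omega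
  rcases eq_or_ne m ⟨i + 1, hi⟩ with rfl | h₂
  · simp only [Equiv.swap_apply_right]; omega
  rw [Equiv.swap_apply_of_ne_of_ne h₁ h₂]

lemma isAdjacent_mul_swap {i : ℕ} (hi : i + 1 < n) (g : GL (Fin n) 𝔽) (w : Equiv.Perm (Fin n)) :
    IsAdjacent i ((g * permGL 𝔽 w : GL (Fin n) 𝔽) : X)
      ((g * permGL 𝔽 (w * Equiv.swap ⟨i, by omega⟩ ⟨i + 1, hi⟩) : GL (Fin n) 𝔽) : X) := by
  intro k hk
  rw [flag_mul_permGL, flag_mul_permGL, Equiv.Perm.coe_mul, ← Finset.image_image]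
  congr 3
  ext m
  simp only [Finset.mem_image, Finset.mem_filter, Finset.mem_univ, true_and]
  refine ⟨fun hm => ⟨_, (swap_val_lt_iff hi hk m).2 hm, Equiv.swap_apply_self _ _ _⟩, ?_⟩
  rintro ⟨a, ha, rfl⟩
  exact (swap_val_lt_iff hi hk a).2 ha

/-- The fundamental cycle of the apartment `{g w B | w ∈ Sₙ}`. -/
noncomputable def apartmentClass (g : GL (Fin n) 𝔽) : X → ℂ :=
  fun y => ∑ w : Equiv.Perm (Fin n),
    if ((g * permGL 𝔽 w : GL (Fin n) 𝔽) : X) = y then ((Equiv.Perm.sign w : ℤ) : ℂ) else 0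

end Apartments

section ApartmentClass

variable {𝔽 : Type*} [Field 𝔽] [Fintype 𝔽] {n : ℕ}

local notation "X" => GL (Fin n) 𝔽 ⧸ BorelGL 𝔽 n

lemma apartmentClass_mem (g : GL (Fin n) 𝔽) : apartmentClass g ∈ steinbergSpace 𝔽 n := by
  intro i hi x
  set s : Equiv.Perm (Fin n) := Equiv.swap ⟨i, by omega⟩ ⟨i + 1, hi⟩
  set t : Equiv.Perm (Fin n) → ℂ := fun w =>
    if IsAdjacent i x ((g * permGL 𝔽 w : GL (Fin n) 𝔽) : X) then ((Equiv.Perm.sign w : ℤ) : ℂ)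
    else 0
  have hs : Equiv.Perm.sign s = -1 :=
    Equiv.Perm.sign_swap fun h => by simpa using congrArg Fin.val h
  have ht (w : Equiv.Perm (Fin n)) : t (w * s) = -t w := by
    have hadj := isAdjacent_mul_swap hi g w
    have : IsAdjacent i x ((g * permGL 𝔽 (w * s) : GL (Fin n) 𝔽) : X) ↔
        IsAdjacent i x ((g * permGL 𝔽 w : GL (Fin n) 𝔽) : X) :=
      ⟨fun h => h.trans hadj.symm, fun h => h.trans hadj⟩
    simp only [t, this, Equiv.Perm.sign_mul, hs]
    split_ifs <;> simp
  have hsum : ∑ y with IsAdjacent i x y, apartmentClass g y = ∑ w, t w := by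
    simp only [apartmentClass, t]
    rw [Finset.sum_comm]
    refine Finset.sum_congr rfl fun w _ => ?_
    simp only [Finset.sum_ite_eq, Finset.mem_filter, Finset.mem_univ, true_and]
  rw [hsum, ← self_eq_neg, ← Finset.sum_neg_distrib]
  exact (Fintype.sum_equiv (Equiv.mulRight s) _ _ fun w => (ht w).symm).symm

end ApartmentClass

section BigCell

variable {𝔽 : Type*} [Field 𝔽] {n : ℕ}

local notation "X" => GL (Fin n) 𝔽 ⧸ BorelGL 𝔽 n

lemma isOpposite_smul_iff {b : GL (Fin n) 𝔽} (hb : b ∈ BorelGL 𝔽 n) (x : X) :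
    IsOpposite (b • x) ↔ IsOpposite x := by
  refine forall_congr' fun i => ?_
  have := Submodule.map_eq_bot_iff (e := glEquiv b) (p := flag x i ⊓ stdFlag 𝔽 n (n - i))
  rwa [Submodule.map_inf _ (glEquiv b).injective, map_stdFlag_of_mem_borel hb, ← flag_smul] at this

lemma isOpposite_permGL_iff (σ : Equiv.Perm (Fin n)) :
    IsOpposite ((permGL 𝔽 σ : GL (Fin n) 𝔽) : X) ↔ σ = Fin.revPerm := by
  have hflag (i : ℕ) : flag ((permGL 𝔽 σ : GL (Fin n) 𝔽) : X) i =
      coordSubspace 𝔽 (({k : Fin n | (k : ℕ) < i} : Finset (Fin n)).image σ) := by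
    rw [← one_mul (permGL 𝔽 σ), flag_mul_permGL, map_glEquiv_one]
  simp only [IsOpposite, hflag, stdFlag, coordSubspace_inf, coordSubspace_eq_bot_iff,
    Finset.eq_empty_iff_forall_notMem, Finset.mem_inter, Finset.mem_image, Finset.mem_filter,
    Finset.mem_univ, true_and, not_and, forall_exists_index, and_imp]
  constructor
  · intro h
    have hle (k : Fin n) : ((Fin.revPerm k : Fin n) : ℕ) ≤ σ k := by
      have := h (k + 1) (σ k) k (by omega) rfl
      simp only [Fin.revPerm_apply, Fin.val_rev]
      omega
    have hsum : ∑ k, ((Fin.revPerm k : Fin n) : ℕ) = ∑ k, (σ k : ℕ) := by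
      rw [Equiv.sum_comp Fin.revPerm (fun k : Fin n => (k : ℕ)),
        Equiv.sum_comp σ (fun k : Fin n => (k : ℕ))]
    have heq := (Finset.sum_eq_sum_iff_of_le fun k _ => hle k).1 hsum
    exact Equiv.ext fun k => (Fin.ext (heq k (Finset.mem_univ k))).symm
  · rintro rfl i _ k hk rfl
    simp only [Fin.revPerm_apply, Fin.val_rev]
    omega

lemma flag_mul_revPerm (g : GL (Fin n) 𝔽) (i : ℕ) :
    flag ((g * permGL 𝔽 Fin.revPerm : GL (Fin n) 𝔽) : X) i =
      (coordSubspace 𝔽 ({k : Fin n | n ≤ k + i} : Finset (Fin n))).map (glEquiv g).toLinearMap := by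
  rw [flag_mul_permGL]
  congr 3
  ext m
  simp only [Finset.mem_image, Finset.mem_filter, Finset.mem_univ, true_and, Fin.revPerm_apply]
  refine ⟨?_, fun hm => ⟨m.rev, by simp only [Fin.val_rev]; omega, Fin.rev_rev m⟩⟩
  rintro ⟨k, hk, rfl⟩
  simp only [Fin.val_rev]
  omega

def IsUnitriangular (A : Matrix (Fin n) (Fin n) 𝔽) : Prop := A.IsUpperTriangular ∧ ∀ i, A i i = 1

noncomputable def unitriangularGL {A : Matrix (Fin n) (Fin n) 𝔽} (hA : IsUnitriangular A) :
    GL (Fin n) 𝔽 :=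
  .mkOfDetNeZero A (by simp [Matrix.det_of_isUpperTriangular hA.1, hA.2])

@[simp] lemma coe_unitriangularGL {A : Matrix (Fin n) (Fin n) 𝔽} (hA : IsUnitriangular A) :
    (unitriangularGL hA : Matrix (Fin n) (Fin n) 𝔽) = A := rfl

lemma unitriangularGL_mem_borel {A : Matrix (Fin n) (Fin n) 𝔽} (hA : IsUnitriangular A) :
    unitriangularGL hA ∈ BorelGL 𝔽 n := hA.1

lemma isOpposite_unitriangular {A : Matrix (Fin n) (Fin n) 𝔽} (hA : IsUnitriangular A) :
    IsOpposite ((unitriangularGL hA * permGL 𝔽 Fin.revPerm : GL (Fin n) 𝔽) : X) := by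
  rw [← smul_eq_mul, ← MulAction.Quotient.smul_mk,
    isOpposite_smul_iff (unitriangularGL_mem_borel hA), isOpposite_permGL_iff]

end BigCell

section NormalForm

variable {𝔽 : Type*} [Field 𝔽] {n : ℕ}

local notation "X" => GL (Fin n) 𝔽 ⧸ BorelGL 𝔽 n

lemma mulVec_single_sub_single_mem_stdFlag {A : Matrix (Fin n) (Fin n) 𝔽}
    (hA : IsUnitriangular A) (k : Fin n) :
    A *ᵥ Pi.single k 1 - Pi.single k 1 ∈ stdFlag 𝔽 n k := by
  refine mem_stdFlag.2 fun m hm => ?_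
  rw [Pi.sub_apply, Matrix.mulVec_single_one, Matrix.col_apply]
  rcases (Fin.le_def.2 hm).eq_or_lt with rfl | hlt
  · simp [hA.2]
  · rw [hA.1 hlt, Pi.single_eq_of_ne hlt.ne', sub_zero]

lemma glEquiv_single_mem_flag_mul_revPerm (g : GL (Fin n) 𝔽) (k : Fin n) :
    glEquiv g (Pi.single k 1) ∈ flag ((g * permGL 𝔽 Fin.revPerm : GL (Fin n) 𝔽) : X) (n - k) := by
  rw [flag_mul_revPerm]
  exact ⟨_, single_mem_coordSubspace (by simp), rfl⟩

/-- Columns of `A` are pinned down by the opposite flag `A w₀ B`: the `k`-th one lies in its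
`(n - k)`-th member and differs from `Pi.single k 1` by a vector of `stdFlag k`, which meets
that member trivially. -/
theorem unitriangular_eq_of_mk_eq {A A' : Matrix (Fin n) (Fin n) 𝔽} (hA : IsUnitriangular A)
    (hA' : IsUnitriangular A')
    (h : ((unitriangularGL hA * permGL 𝔽 Fin.revPerm : GL (Fin n) 𝔽) : X) =
      ((unitriangularGL hA' * permGL 𝔽 Fin.revPerm : GL (Fin n) 𝔽) : X)) : A = A' := by
  have hcol (k : Fin n) : A *ᵥ Pi.single k 1 = A' *ᵥ Pi.single k 1 := by
    have h₁ := glEquiv_single_mem_flag_mul_revPerm (𝔽 := 𝔽) (unitriangularGL hA) k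
    have h₂ := glEquiv_single_mem_flag_mul_revPerm (𝔽 := 𝔽) (unitriangularGL hA') k
    rw [← h] at h₂
    have h₃ := sub_mem (mulVec_single_sub_single_mem_stdFlag hA k)
      (mulVec_single_sub_single_mem_stdFlag hA' k)
    rw [sub_sub_sub_cancel_right] at h₃
    have hopp := isOpposite_unitriangular (𝔽 := 𝔽) hA (n - k)
    rw [Nat.sub_sub_self k.2.le] at hopp
    have := hopp ▸ Submodule.mem_inf.2 ⟨sub_mem h₁ h₂, h₃⟩
    simpa [sub_eq_zero] using this
  ext r k
  simpa [Matrix.mulVec_single_one] using congrFun (hcol k) r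

theorem exists_unitriangular_of_isOpposite {x : X} (hx : IsOpposite x) :
    ∃ (A : Matrix (Fin n) (Fin n) 𝔽) (hA : IsUnitriangular A),
      ((unitriangularGL hA * permGL 𝔽 Fin.revPerm : GL (Fin n) 𝔽) : X) = x := by
  have hsup (k : Fin n) : flag x (n - k) ⊔ stdFlag 𝔽 n k = ⊤ := by
    refine Submodule.eq_top_of_disjoint _ _ ?_ (disjoint_iff.2 ?_)
    · rw [finrank_flag x (Nat.sub_le n k), finrank_stdFlag, Module.finrank_fin_fun]
      omega
    · simpa [Nat.sub_sub_self k.2.le] using hx (n - k)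
  choose v hv c hc hvc using fun k => Submodule.mem_sup.1 ((hsup k).symm ▸
    Submodule.mem_top (x := (Pi.single k 1 : Fin n → 𝔽)))
  have hv' (r k : Fin n) (hkr : k ≤ r) : v k r = (Pi.single k 1 : Fin n → 𝔽) r := by
    rw [← hvc k, Pi.add_apply, mem_stdFlag.1 (hc k) r hkr, add_zero]
  have hA : IsUnitriangular (Matrix.of fun r k => v k r) :=
    ⟨fun {r k} hkr => (hv' r k hkr.le).trans (Pi.single_eq_of_ne hkr.ne' _),
      fun k => (hv' k k le_rfl).trans (Pi.single_eq_same k 1)⟩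
  refine ⟨_, hA, eq_of_flag_eq fun i => ?_⟩
  rcases le_or_gt n i with hi | hi
  · rw [flag_of_le _ hi, flag_of_le _ hi]
  refine Submodule.eq_of_le_of_finrank_eq ?_ (by rw [finrank_flag _ hi.le, finrank_flag _ hi.le])
  rw [flag_mul_revPerm, coordSubspace_eq_span, Submodule.map_span_le]
  rintro - ⟨k, hk, rfl⟩
  have hcol : glEquiv (unitriangularGL hA) (Pi.single k 1) = v k := by
    ext r; simp
  change glEquiv _ (Pi.single k 1) ∈ _
  rw [hcol]
  exact flag_mono x (by simp at hk; omega) (hv k)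

lemma apartmentClass_apply_of_isOpposite {A : Matrix (Fin n) (Fin n) 𝔽} (hA : IsUnitriangular A)
    {y : X} (hy : IsOpposite y) :
    apartmentClass (unitriangularGL hA * permGL 𝔽 Fin.revPerm) y =
      if ((unitriangularGL hA * permGL 𝔽 Fin.revPerm : GL (Fin n) 𝔽) : X) = y then 1 else 0 := by
  rw [apartmentClass, Finset.sum_eq_single 1 (fun w _ hw => if_neg fun h => hw ?_) (by simp)]
  · simp
  rw [← h, mul_assoc, ← map_mul, ← smul_eq_mul, ← MulAction.Quotient.smul_mk,
    isOpposite_smul_iff (unitriangularGL_mem_borel hA), isOpposite_permGL_iff] at hy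
  simpa using hy

noncomputable def unitriangularEquivBigCell :
    {A : Matrix (Fin n) (Fin n) 𝔽 // IsUnitriangular A} ≃ {x : X // IsOpposite x} :=
  Equiv.ofBijective
    (fun A => ⟨((unitriangularGL A.2 * permGL 𝔽 Fin.revPerm : GL (Fin n) 𝔽) : X),
      isOpposite_unitriangular A.2⟩)
    ⟨fun A A' h => Subtype.ext (unitriangular_eq_of_mk_eq A.2 A'.2 (congrArg Subtype.val h)),
      fun x => let ⟨A, hA, h⟩ := exists_unitriangular_of_isOpposite x.2; ⟨⟨A, hA⟩, Subtype.ext h⟩⟩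

noncomputable def unitriangularEquivFun :
    {A : Matrix (Fin n) (Fin n) 𝔽 // IsUnitriangular A} ≃
      ({p : Fin n × Fin n // p.1 < p.2} → 𝔽) where
  toFun A p := A.1 p.1.1 p.1.2
  invFun f := ⟨Matrix.of fun r k => if h : r < k then f ⟨(r, k), h⟩ else if r = k then 1 else 0,
    fun {r k} (hkr : k < r) => by simp [not_lt.2 hkr.le, hkr.ne'], fun k => by simp⟩
  left_inv A := by
    ext r k
    rcases lt_trichotomy r k with h | rfl | h
    · simp [h]
    · simp [A.2.2 r]
    · simp [not_lt.2 h.le, h.ne', A.2.1 h]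
  right_inv f := funext fun p => by simp [p.2]

lemma card_lt_pairs : Fintype.card {p : Fin n × Fin n // p.1 < p.2} = n * (n - 1) / 2 := by
  rw [Fintype.card_subtype, Fintype.card_product_filter_lt, Fintype.card_fin, Nat.choose_two_right]

lemma exists_mem_borel_smul_eq {y : X} (hy : IsOpposite y) :
    ∃ b ∈ BorelGL 𝔽 n, b • ((permGL 𝔽 Fin.revPerm : GL (Fin n) 𝔽) : X) = y := by
  obtain ⟨A, hA, rfl⟩ := exists_unitriangular_of_isOpposite hy
  exact ⟨_, unitriangularGL_mem_borel hA, rfl⟩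

end NormalForm

section Dimension

variable {𝔽 : Type*} [Field 𝔽] [Fintype 𝔽] {n : ℕ}

local notation "X" => GL (Fin n) 𝔽 ⧸ BorelGL 𝔽 n

lemma card_isOpposite {q : ℕ} (hq : Fintype.card 𝔽 = q) :
    Fintype.card {x : X // IsOpposite x} = q ^ (n * (n - 1) / 2) := by
  rw [← Fintype.card_congr unitriangularEquivBigCell, Fintype.card_congr unitriangularEquivFun,
    Fintype.card_fun, hq, card_lt_pairs]

noncomputable def restrictBigCell : steinbergSpace 𝔽 n →ₗ[ℂ] ({x : X // IsOpposite x} → ℂ) :=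
  LinearMap.funLeft ℂ ℂ Subtype.val ∘ₗ (steinbergSpace 𝔽 n).subtype

lemma restrictBigCell_injective : Function.Injective (restrictBigCell (𝔽 := 𝔽) (n := n)) := by
  refine (injective_iff_map_eq_zero _).2 fun f hf => Subtype.ext ?_
  exact eq_zero_of_forall_isOpposite f.2 fun x hx => congrFun hf ⟨x, hx⟩

lemma restrictBigCell_surjective : Function.Surjective (restrictBigCell (𝔽 := 𝔽) (n := n)) := by
  intro φ
  let u (t : {x : X // IsOpposite x}) : GL (Fin n) 𝔽 :=
    unitriangularGL (unitriangularEquivBigCell.symm t).2 * permGL 𝔽 Fin.revPerm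
  have hu (t) : ((u t : GL (Fin n) 𝔽) : X) = t :=
    congrArg Subtype.val (unitriangularEquivBigCell.apply_symm_apply t)
  refine ⟨⟨∑ t, φ t • apartmentClass (u t), Submodule.sum_mem _ fun t _ =>
    Submodule.smul_mem _ _ (apartmentClass_mem _)⟩, funext fun s => ?_⟩
  have hδ (t) : apartmentClass (u t) s = if t = s then 1 else 0 := by
    rw [apartmentClass_apply_of_isOpposite _ s.2, hu]
    simp only [Subtype.val_inj]
  simp only [restrictBigCell, LinearMap.coe_comp, Function.comp_apply, Submodule.coe_subtype,
    LinearMap.funLeft_apply, Finset.sum_apply, Pi.smul_apply, smul_eq_mul, hδ, mul_ite, mul_one,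
    mul_zero, Finset.sum_ite_eq', Finset.mem_univ, if_true]

theorem finrank_steinbergSpace {q : ℕ} (hq : Fintype.card 𝔽 = q) :
    Module.finrank ℂ (steinbergSpace 𝔽 n) = q ^ (n * (n - 1) / 2) := by
  rw [LinearEquiv.finrank_eq (LinearEquiv.ofBijective _
    ⟨restrictBigCell_injective, restrictBigCell_surjective⟩), Module.finrank_fintype_fun_eq_card,
    card_isOpposite hq]

end Dimension

section BorelFixed

variable {𝔽 : Type*} [Field 𝔽] [Fintype 𝔽] {n : ℕ}

local notation "X" => GL (Fin n) 𝔽 ⧸ BorelGL 𝔽 n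

/-- Average over `B` a translate of `f ∈ W` that is nonzero at the base point `B`. -/
lemma exists_borel_fixed_mem {W : Submodule ℂ (X → ℂ)} (hW : RepInvariant (permRep 𝔽 n) W)
    (hW₀ : W ≠ ⊥) : ∃ f ∈ W, f ≠ 0 ∧ ∀ b ∈ BorelGL 𝔽 n, permRep 𝔽 n b f = f := by
  obtain ⟨f, hfW, hf⟩ := W.exists_mem_ne_zero_of_ne_bot hW₀
  obtain ⟨x, hx⟩ : ∃ x, f x ≠ 0 := by
    by_contra! h
    exact hf (funext h)
  obtain ⟨k, rfl⟩ := QuotientGroup.mk_surjective x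
  refine ⟨∑ b : BorelGL 𝔽 n, permRep 𝔽 n b (permRep 𝔽 n k⁻¹ f),
    Submodule.sum_mem _ fun b _ => hW _ _ (hW _ _ hfW), fun h => hx ?_,
    fun b hb => (permRep 𝔽 n).apply_sum_subgroup _ _ hb⟩
  have hval (b : BorelGL 𝔽 n) :
      permRep 𝔽 n b (permRep 𝔽 n k⁻¹ f) ((1 : GL (Fin n) 𝔽) : X) = f k := by
    rw [permRep_apply, permRep_apply, inv_inv, MulAction.Quotient.smul_mk,
      MulAction.Quotient.smul_mk, smul_eq_mul, smul_eq_mul, mul_one]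
    exact congrArg f (QuotientGroup.eq.2 (by simp))
  simpa only [Finset.sum_apply, hval, Finset.sum_const, Finset.card_univ, nsmul_eq_mul,
    Pi.zero_apply, mul_eq_zero, Nat.cast_eq_zero, Fintype.card_ne_zero, false_or]
    using congrFun h ((1 : GL (Fin n) 𝔽) : X)

lemma eq_zero_of_borel_fixed {f : X → ℂ} (hf : f ∈ steinbergSpace 𝔽 n)
    (hfix : ∀ b ∈ BorelGL 𝔽 n, permRep 𝔽 n b f = f)
    (h₀ : f ((permGL 𝔽 Fin.revPerm : GL (Fin n) 𝔽) : X) = 0) : f = 0 := by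
  refine eq_zero_of_forall_isOpposite hf fun y hy => ?_
  obtain ⟨b, hb, rfl⟩ := exists_mem_borel_smul_eq hy
  rw [← congrFun (hfix b hb), permRep_apply, inv_smul_smul, h₀]

lemma steinbergSpace_ne_bot : steinbergSpace 𝔽 n ≠ ⊥ := by
  rw [Ne, ← Submodule.finrank_eq_zero, finrank_steinbergSpace rfl]
  exact pow_ne_zero _ Fintype.card_ne_zero

end BorelFixed

end Steinberg

open Steinberg in
theorem exists_steinberg_subrepresentation_general (𝔽 : Type*) [Field 𝔽] [Fintype 𝔽]
    (q n : ℕ) (hq : Fintype.card 𝔽 = q) :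
    ∃ (W : Submodule ℂ ((GL (Fin n) 𝔽 ⧸ BorelGL 𝔽 n) → ℂ))
      (h : RepInvariant (permRep 𝔽 n) W),
      IsIrreducibleRep (subRep (permRep 𝔽 n) W h) ∧
        Module.finrank ℂ W = q ^ (n * (n - 1) / 2) :=
  ⟨steinbergSpace 𝔽 n, steinbergSpace_invariant,
    isIrreducibleRep_subRep_of_fixed _ (BorelGL 𝔽 n) steinbergSpace_invariant steinbergSpace_ne_bot
      (fun _ _ hW hW₀ => exists_borel_fixed_mem hW hW₀)
      (LinearMap.proj ((permGL 𝔽 Fin.revPerm : GL (Fin n) 𝔽) : GL (Fin n) 𝔽 ⧸ BorelGL 𝔽 n))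
      (fun _ hf hfix h₀ => eq_zero_of_borel_fixed hf hfix h₀),
    finrank_steinbergSpace hq⟩

/-- **Existence of the Steinberg representation of `GL_n`.** Let `𝔽` be a finite field
with `q` elements, `n ≥ 1`, `G = GL_n(𝔽)`, and `B` the Borel subgroup of invertible
upper-triangular matrices. The permutation representation `ℂ[G/B]` of `G` has an
irreducible subrepresentation of dimension `q ^ (n (n - 1) / 2)`. -/
theorem exists_steinberg_subrepresentation (𝔽 : Type*) [Field 𝔽] [Fintype 𝔽]
    (q n : ℕ) (hq : Fintype.card 𝔽 = q) (hn : 1 ≤ n) :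
    ∃ (W : Submodule ℂ ((GL (Fin n) 𝔽 ⧸ BorelGL 𝔽 n) → ℂ))
      (h : RepInvariant (permRep 𝔽 n) W),
      IsIrreducibleRep (subRep (permRep 𝔽 n) W h) ∧
        Module.finrank ℂ W = q ^ (n * (n - 1) / 2) :=
  exists_steinberg_subrepresentation_general 𝔽 q n hq
end
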